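/- arXiv:1412.6743 — 11 statements merged into one kernel-verified Lean document; each statement's English description precedes it below -/
import Mathlib

section
/- Let A be a continuous linear equivalence of ℋ = ℝ × H that preserves the Lorentz form. Then there exist ε ∈ {1, −1}, a surjective linear isometry Q of H, and a vector w ∈ H such that A = P ∘ T_w, where P is the bounded operator P(s,x) = (ε·s, Q x) and T_w is the boost associated with w. -/
open scoped RealInnerProductSpace

noncomputable section

variable {H : Type*} [NormedAddCommGroup H] [InnerProductSpace ℝ H]

/-- The Lorentz form on `ℝ × H`: `⟨(s,x),(t,y)⟩_L = ⟪x,y⟫ - s·t`. -/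
def lorentzInner (z w : ℝ × H) : ℝ := ⟪z.2, w.2⟫ - z.1 * w.1

/-- The rank-one operator `a ⊗ b : x ↦ ⟪b,x⟫ • a`. -/
def rankOne (a b : H) : H →L[ℝ] H := (innerSL ℝ b).smulRight a

/-- The boost `T_v` associated with a vector `v`, with the convention `T_0 = id`.
For `v ≠ 0`, `T_v (s,x) = (c_v·s + ⟪v,x⟫, s•v + S_v x)` where `c_v = √(1+‖v‖²)` and
`S_v = id + ((c_v - 1)/‖v‖²)·(v ⊗ v)`. -/
def boost (v : H) : (ℝ × H) →L[ℝ] (ℝ × H) :=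
  letI : Decidable (v = 0) := Classical.dec _
  if v = 0 then ContinuousLinearMap.id ℝ (ℝ × H)
  else
    ((Real.sqrt (1 + ‖v‖ ^ 2) • ContinuousLinearMap.fst ℝ ℝ H +
        (innerSL ℝ v).comp (ContinuousLinearMap.snd ℝ ℝ H)).prod
      ((ContinuousLinearMap.fst ℝ ℝ H).smulRight v +
        (ContinuousLinearMap.id ℝ H +
            ((Real.sqrt (1 + ‖v‖ ^ 2) - 1) / ‖v‖ ^ 2) • rankOne v v).comp
          (ContinuousLinearMap.snd ℝ ℝ H)))

/-!
Since `A` preserves the Lorentz form, `A⁻¹ (1, 0)` lies on the hyperboloid `⟨z, z⟩_L = -1`, whose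
points are exactly the vectors `±T_v (1, 0)`. Then `A ∘ T_v` maps `(1, 0)` to `(±1, 0)`, hence maps
`H = (1, 0)^⊥` onto `(±1, 0)^⊥ = H`, where the Lorentz form is the inner product: it is `(s, x) ↦ (±s, Q x)`
with `Q` a surjective isometry. Finally `A = (A ∘ T_v) ∘ T_{-v}`.
-/

def PreservesLorentz (f : ℝ × H → ℝ × H) : Prop :=
  ∀ z w, lorentzInner (f z) (f w) = lorentzInner z w

lemma PreservesLorentz.comp {f g : ℝ × H → ℝ × H} (hf : PreservesLorentz f)
    (hg : PreservesLorentz g) : PreservesLorentz (f ∘ g) :=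
  fun z w => (hf (g z) (g w)).trans (hg z w)

lemma boost_apply {v : H} (hv : v ≠ 0) (s : ℝ) (x : H) :
    boost v (s, x) =
      (√(1 + ‖v‖ ^ 2) * s + ⟪v, x⟫,
       s • v + (x + ((√(1 + ‖v‖ ^ 2) - 1) / ‖v‖ ^ 2 * ⟪v, x⟫) • v)) := by
  simp [boost, hv, rankOne, smul_smul, mul_comm]

lemma boost_one_zero (v : H) : boost v (1, 0) = (√(1 + ‖v‖ ^ 2), v) := by
  rcases eq_or_ne v 0 with rfl | hv
  · simp [boost]
  · simp [boost_apply hv]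

lemma preservesLorentz_boost (v : H) : PreservesLorentz (boost v) := by
  rintro ⟨s, x⟩ ⟨t, y⟩
  rcases eq_or_ne v 0 with rfl | hv
  · simp [boost]
  have hv2 : ‖v‖ ^ 2 ≠ 0 := by positivity
  have hc : √(1 + ‖v‖ ^ 2) ^ 2 = 1 + ‖v‖ ^ 2 := Real.sq_sqrt (by positivity)
  simp only [boost_apply hv, lorentzInner, inner_add_left, inner_add_right, real_inner_smul_left,
    real_inner_smul_right, real_inner_self_eq_norm_sq, real_inner_comm x v, real_inner_comm y v]
  field_simp
  linear_combination (⟪x, v⟫ * ⟪y, v⟫ - t * s * ‖v‖ ^ 2) * hc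

lemma boost_neg_apply_boost (v : H) (z : ℝ × H) : boost (-v) (boost v z) = z := by
  obtain ⟨s, x⟩ := z
  rcases eq_or_ne v 0 with rfl | hv
  · simp [boost]
  have hv2 : ‖v‖ ^ 2 ≠ 0 := by positivity
  have hc : √(1 + ‖v‖ ^ 2) ^ 2 = 1 + ‖v‖ ^ 2 := Real.sq_sqrt (by positivity)
  simp only [boost_apply hv, boost_apply (neg_ne_zero.mpr hv), norm_neg, inner_neg_left,
    inner_add_right, real_inner_smul_right, real_inner_self_eq_norm_sq, Prod.mk.injEq]
  constructor
  · field_simp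
    linear_combination s * hc
  · match_scalars
    · field_simp
      linear_combination ⟪v, x⟫ * hc
    · field_simp

lemma boost_apply_boost_neg (v : H) (z : ℝ × H) : boost v (boost (-v) z) = z := by
  simpa using boost_neg_apply_boost (-v) z

lemma exists_eq_sign_smul_boost_one_zero {z : ℝ × H} (hz : lorentzInner z z = -1) :
    ∃ ε : ℝ, (ε = 1 ∨ ε = -1) ∧ ∃ v : H, z = ε • boost v (1, 0) := by
  obtain ⟨a, u⟩ := z
  have ha : √(1 + ‖u‖ ^ 2) = |a| := by
    rw [← Real.sqrt_sq_eq_abs]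
    congr 1
    simp only [lorentzInner, real_inner_self_eq_norm_sq] at hz
    linarith
  rcases le_or_gt 0 a with h | h
  · exact ⟨1, .inl rfl, u, by simp [boost_one_zero, ha, abs_of_nonneg h]⟩
  · exact ⟨-1, .inr rfl, -u, by simp [boost_one_zero, ha, abs_of_neg h]⟩

section TimeFixing

variable {B : (ℝ × H) →ₗ[ℝ] (ℝ × H)} (hB : PreservesLorentz B) {ε : ℝ} (hε : ε ≠ 0)
  (h₁ : B (1, 0) = (ε, 0))
include hB hε h₁

lemma fst_apply_zero_eq_zero (x : H) : (B (0, x)).1 = 0 := by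
  have h := hB (0, x) (1, 0)
  simp only [h₁, lorentzInner, inner_zero_right, zero_mul, sub_zero] at h
  simpa [hε] using h

lemma norm_snd_apply_zero (x : H) : ‖(B (0, x)).2‖ = ‖x‖ := by
  have h := hB (0, x) (0, x)
  simp only [lorentzInner, fst_apply_zero_eq_zero hB hε h₁, mul_zero, sub_zero,
    real_inner_self_eq_norm_sq] at h
  exact (sq_eq_sq₀ (norm_nonneg _) (norm_nonneg _)).mp h

lemma apply_eq_mk_mul_snd_apply_zero (s : ℝ) (x : H) :
    B (s, x) = (ε * s, (B (0, x)).2) := by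
  have hsplit : ((s, x) : ℝ × H) = s • ((1 : ℝ), (0 : H)) + (0, x) := by simp
  rw [hsplit, map_add, map_smul, h₁, Prod.ext_iff]
  simp [fst_apply_zero_eq_zero hB hε h₁, mul_comm]

lemma exists_linearIsometryEquiv_of_apply_one_zero (hBs : Function.Surjective B) :
    ∃ Q : H ≃ₗᵢ[ℝ] H, ∀ s x, B (s, x) = (ε * s, Q x) := by
  let L : H →ₗᵢ[ℝ] H :=
    ⟨LinearMap.snd ℝ ℝ H ∘ₗ B ∘ₗ LinearMap.inr ℝ ℝ H, norm_snd_apply_zero hB hε h₁⟩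
  have hL : Function.Surjective L := by
    intro y
    obtain ⟨⟨s, x⟩, hz⟩ := hBs (0, y)
    rw [apply_eq_mk_mul_snd_apply_zero hB hε h₁, Prod.ext_iff] at hz
    exact ⟨x, hz.2⟩
  exact ⟨.ofSurjective L hL, apply_eq_mk_mul_snd_apply_zero hB hε h₁⟩

end TimeFixing

theorem lorentz_eq_rotation_comp_boost_general
    (A : (ℝ × H) ≃L[ℝ] (ℝ × H))
    (hA : ∀ z w : ℝ × H, lorentzInner (A z) (A w) = lorentzInner z w) :
    ∃ (ε : ℝ) (Q : H ≃ₗᵢ[ℝ] H) (w : H),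
      (ε = 1 ∨ ε = -1) ∧
      ∀ z : ℝ × H, A z = (ε * (boost w z).1, Q ((boost w z).2)) := by
  obtain ⟨ε, hε, v, hv⟩ := exists_eq_sign_smul_boost_one_zero (z := A.symm (1, 0))
    (by rw [← hA, A.apply_symm_apply]; simp [lorentzInner])
  have hεε : ε * ε = 1 := by rcases hε with rfl | rfl <;> norm_num
  let B : (ℝ × H) →ₗ[ℝ] (ℝ × H) := (A : (ℝ × H) →L[ℝ] (ℝ × H)).comp (boost v)
  have hB : PreservesLorentz B := PreservesLorentz.comp (f := A) hA (preservesLorentz_boost v)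
  have hB₁ : B (1, 0) = (ε, 0) := by
    have : boost v (1, 0) = ε • A.symm (1, 0) := by rw [hv, smul_smul, hεε, one_smul]
    simp [B, this]
  have hBs : Function.Surjective B := fun z =>
    ⟨boost (-v) (A.symm z), by simp [B, boost_apply_boost_neg]⟩
  obtain ⟨Q, hQ⟩ :=
    exists_linearIsometryEquiv_of_apply_one_zero hB (left_ne_zero_of_mul_eq_one hεε) hB₁ hBs
  refine ⟨ε, Q, -v, hε, fun z => ?_⟩
  simpa [B, boost_apply_boost_neg] using hQ (boost (-v) z).1 (boost (-v) z).2

/-- Every continuous linear equivalence of `ℝ × H` preserving the Lorentz form factors as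
`P ∘ T_w` with `P (s,x) = (ε·s, Q x)`, `ε = ±1`, `Q` a surjective linear isometry of `H`,
and `T_w` a boost. -/
theorem lorentz_eq_rotation_comp_boost [CompleteSpace H]
    (A : (ℝ × H) ≃L[ℝ] (ℝ × H))
    (hA : ∀ z w : ℝ × H, lorentzInner (A z) (A w) = lorentzInner z w) :
    ∃ (ε : ℝ) (Q : H ≃ₗᵢ[ℝ] H) (w : H),
      (ε = 1 ∨ ε = -1) ∧
      ∀ z : ℝ × H, A z = (ε * (boost w z).1, Q ((boost w z).2)) :=
  lorentz_eq_rotation_comp_boost_general A hA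
end
end

section
/- Let H be a real Hilbert space and let B be a nonzero compact operator on H with B* = −B. Then there exist an at most countable index set J, a strictly decreasing family (λ_j)_{j∈J} of positive reals (tending to 0 when J is infinite), and nonzero finite-rank operators B_j on H with B_j* = −B_j, B_j³ = −B_j, and B_j ∘ B_k = 0 for j ≠ k, such that B = Σ_{j∈J} λ_j·B_j with convergence in operator norm; moreover the ranges of the B_j are pairwise orthogonal finite-dimensional subspaces of H of even dimension, and ker B equals the intersection of the subspaces ker B_j. -/
open scoped RealInnerProductSpace

/-!
Let `T := B† B = -B²`: a compact positive operator commuting with `B`. On each eigenspace `E_μ`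
of `T` with `μ > 0` (finite-dimensional by compactness) `B² = -μ`, so `μ^{-1/2} B` is a complex
structure there; composing it with the orthogonal projection `P_μ` onto `E_μ` gives the
components `B_μ`, and the algebraic identities and the even dimension follow. Since the norm of a
compact self-adjoint operator is its spectral radius, and nonzero spectral values are eigenvalues,
`T` has norm `≤ ε²` on the orthogonal complement of the `E_μ` with `μ ≥ ε²`; hence
`‖B - ∑_{μ ≥ ε²} √μ B_μ‖ ≤ ε`, and only finitely many `μ ≥ ε²` occur.
-/

open Module End Submodule

theorem Module.End.even_finrank_of_mul_self_eq_neg_one {K V : Type*} [Field K] [LinearOrder K]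
    [IsStrictOrderedRing K] [AddCommGroup V] [Module K V] [FiniteDimensional K V] {f : End K V}
    (hf : f * f = -1) : Even (finrank K V) := by
  have hdet : LinearMap.det f * LinearMap.det f = (-1) ^ finrank K V := by
    rw [← map_mul, hf, ← neg_one_smul K 1, LinearMap.det_smul, map_one, mul_one]
  by_contra hodd
  have : (-1 : K) ^ finrank K V = -1 := (Nat.not_even_iff_odd.mp hodd).neg_one_pow
  nlinarith [mul_self_nonneg (LinearMap.det f)]

theorem countable_of_finite_setOf_le {ι : Type*} (f : ι → ℝ) (hpos : ∀ i, 0 < f i)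
    (hfin : ∀ ε > 0, {i | ε ≤ f i}.Finite) : Countable ι := by
  have hcover : ⋃ n : ℕ, {i | 1 / ((n : ℝ) + 1) ≤ f i} = Set.univ :=
    Set.eq_univ_of_forall fun i => Set.mem_iUnion.mpr <|
      (exists_nat_one_div_lt (hpos i)).imp fun _ h => h.le
  exact Set.countable_univ_iff.mp <|
    hcover ▸ Set.countable_iUnion fun n => (hfin _ (by positivity)).countable

section

variable {𝕜 E : Type*} [RCLike 𝕜] [NormedAddCommGroup E] [InnerProductSpace 𝕜 E]

theorem ContinuousLinearMap.finite_of_orthonormal_of_apply_eq_smul {T : E →L[𝕜] E}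
    (hT : IsCompactOperator T) {ι : Type*} {e : ι → E} (he : Orthonormal 𝕜 e) {μ : ι → 𝕜}
    (hTe : ∀ i, T (e i) = μ i • e i) {ε : ℝ} (hε : 0 < ε) (hμ : ∀ i, ε ≤ ‖μ i‖) : Finite ι := by
  -- the vectors `T (e i)` are `ε`-separated and lie in a compact set
  have hsep : ∀ i j, i ≠ j → ε ≤ dist (T (e i)) (T (e j)) := fun i j hij => calc
    ε ≤ ‖μ i‖ := hμ i
    _ = ‖inner 𝕜 (e i) (T (e i) - T (e j))‖ := by
      simp [hTe, inner_sub_right, inner_smul_right, he.inner_eq_zero hij, he.1 i]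
    _ ≤ dist (T (e i)) (T (e j)) := by
      simpa [he.1 i, dist_eq_norm] using norm_inner_le_norm (e i) (T (e i) - T (e j))
  obtain ⟨K, hK, hTK⟩ := hT.image_closedBall_subset_compact 1
  obtain ⟨t, htf, htK⟩ := Metric.totallyBounded_iff.mp hK.totallyBounded (ε / 2) (by positivity)
  have hcover : ∀ i, ∃ y ∈ t, dist (T (e i)) y < ε / 2 := fun i => by
    simpa using htK (hTK ⟨e i, by simp [he.1 i], rfl⟩)
  choose y hyt hy using hcover
  have := htf.to_subtype
  refine Finite.of_injective (fun i => (⟨y i, hyt i⟩ : t)) fun i j hij => ?_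
  by_contra hne
  have hyij : y i = y j := congrArg Subtype.val hij
  have hyj : dist (T (e j)) (y i) < ε / 2 := hyij ▸ hy j
  linarith [hsep i j hne, hy i, dist_triangle_right (T (e i)) (T (e j)) (y i)]

variable [CompleteSpace E]

theorem OrthogonalFamily.sub_sum_starProjection {ι : Type*} {V : ι → Submodule 𝕜 E}
    [∀ i, (V i).HasOrthogonalProjection]
    (hV : OrthogonalFamily 𝕜 (fun i => V i) fun i => (V i).subtypeₗᵢ) (s : Finset ι) (x : E) :
    x - ∑ i ∈ s, (V i).starProjection x = (⨆ i ∈ s, V i)ᗮ.starProjection x := by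
  classical
  symm
  apply eq_starProjection_of_mem_of_inner_eq_zero
  · rw [iSup_subtype', ← iInf_orthogonal, mem_iInf]
    intro ⟨i, hi⟩ u hu
    have hsum : ∑ j ∈ s, inner 𝕜 u ((V j).starProjection x) =
        inner 𝕜 u ((V i).starProjection x) :=
      Finset.sum_eq_single_of_mem i hi fun j _ hji =>
        (isOrtho_iff_inner_eq.mp (hV.isOrtho hji.symm)) u hu _ (coe_mem _)
    rw [inner_sub_right, _root_.inner_sum, hsum, ← inner_sub_right]
    exact inner_right_of_mem_orthogonal hu (sub_starProjection_mem_orthogonal x)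
  · intro w hw
    rw [sub_sub_cancel, sum_inner]
    refine Finset.sum_eq_zero fun i hi => inner_right_of_mem_orthogonal ?_ hw
    exact (le_iSup₂_of_le i hi le_rfl : V i ≤ _) (coe_mem _)

namespace ContinuousLinearMap

variable {T : E →L[𝕜] E}

instance hasOrthogonalProjection_eigenspace (T : E →L[𝕜] E) (μ : 𝕜) :
    (eigenspace (T : End 𝕜 E) μ).HasOrthogonalProjection := by
  have : IsClosed (eigenspace (T : End 𝕜 E) μ : Set E) := by
    have h : eigenspace (T : End 𝕜 E) μ = ((T - μ • 1 : E →L[𝕜] E) : E →ₗ[𝕜] E).ker := by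
      ext x; simp [sub_eq_zero]
    rw [h]
    exact isClosed_ker _
  have := this.completeSpace_coe
  infer_instance

theorem norm_le_of_forall_hasEigenvalue (hT : IsCompactOperator T) (hT' : IsSelfAdjoint T)
    {c : ℝ} (hc : 0 ≤ c) (h : ∀ μ, HasEigenvalue (T : End 𝕜 E) μ → ‖μ‖ ≤ c) : ‖T‖ ≤ c := by
  have hρ : spectralRadius 𝕜 T ≤ ENNReal.ofReal c := by
    refine iSup₂_le fun μ hμ => ?_
    rcases eq_or_ne μ 0 with rfl | hμ0
    · simp
    · rw [← hT.hasEigenvalue_iff_mem_spectrum hμ0] at hμ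
      rw [← ENNReal.ofReal_coe_nnreal, coe_nnnorm]
      exact ENNReal.ofReal_le_ofReal (h μ hμ)
  rw [T.spectralRadius_eq_nnnorm hT', ← ENNReal.ofReal_coe_nnreal, coe_nnnorm] at hρ
  exact (ENNReal.ofReal_le_ofReal_iff hc).mp hρ

theorem norm_apply_le_of_mem_orthogonal_iSup_eigenspace (hT : IsCompactOperator T)
    (hT' : IsSelfAdjoint T) (s : Set 𝕜) {c : ℝ} (hc : 0 ≤ c)
    (h : ∀ μ ∉ s, HasEigenvalue (T : End 𝕜 E) μ → ‖μ‖ ≤ c) {x : E}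
    (hx : x ∈ (⨆ μ ∈ s, eigenspace (T : End 𝕜 E) μ)ᗮ) : ‖T x‖ ≤ c * ‖x‖ := by
  have hK : ∀ v ∈ (⨆ μ ∈ s, eigenspace (T : End 𝕜 E) μ)ᗮ,
      T v ∈ (⨆ μ ∈ s, eigenspace (T : End 𝕜 E) μ)ᗮ := by
    rw [iSup_subtype', ← iInf_orthogonal]
    exact (T : E →ₗ[𝕜] E).iInf_invariant fun μ =>
      hT'.isSymmetric.invariant_orthogonalComplement_eigenspace μ
  set S := T.restrict hK
  have hS : ‖S‖ ≤ c := by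
    refine norm_le_of_forall_hasEigenvalue (hT.restrict' hK)
      (hT'.isSymmetric.restrict_invariant hK).isSelfAdjoint hc fun μ hμ => ?_
    obtain ⟨v, hv, hv0⟩ := hμ.exists_hasEigenvector
    rw [mem_eigenspace_iff] at hv
    have hTv : HasEigenvector (T : End 𝕜 E) μ v :=
      ⟨mem_eigenspace_iff.mpr (congrArg Subtype.val hv), by simpa using hv0⟩
    refine h μ (fun hμs => hv0 ?_) (hasEigenvalue_of_hasEigenvector hTv)
    have hvs : (v : E) ∈ ⨆ μ ∈ s, eigenspace (T : End 𝕜 E) μ :=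
      (le_iSup₂_of_le μ hμs le_rfl : eigenspace _ μ ≤ _) hTv.1
    exact Subtype.ext (inner_self_eq_zero.mp (v.2 _ hvs))
  exact S.le_of_opNorm_le hS ⟨x, hx⟩

theorem finite_setOf_hasEigenvalue_le_norm (hT : IsCompactOperator T) (hT' : IsSelfAdjoint T)
    {ε : ℝ} (hε : 0 < ε) : {μ | HasEigenvalue (T : End 𝕜 E) μ ∧ ε ≤ ‖μ‖}.Finite := by
  set S := {μ | HasEigenvalue (T : End 𝕜 E) μ ∧ ε ≤ ‖μ‖}
  have hunit : ∀ μ : S, ∃ v ∈ eigenspace (T : End 𝕜 E) μ, ‖v‖ = 1 := fun μ => by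
    obtain ⟨v, hv, hv0⟩ := μ.2.1.exists_hasEigenvector
    exact ⟨(‖v‖⁻¹ : 𝕜) • v, (eigenspace _ _).smul_mem _ hv, norm_smul_inv_norm hv0⟩
  choose e he he1 using hunit
  have horth : Orthonormal 𝕜 e := ⟨he1, fun μ ν hμν =>
    hT'.isSymmetric.orthogonalFamily_eigenspaces (Subtype.val_injective.ne hμν)
      ⟨_, he μ⟩ ⟨_, he ν⟩⟩
  exact Set.finite_coe_iff.mp <| finite_of_orthonormal_of_apply_eq_smul hT horth
    (fun μ => mem_eigenspace_iff.mp (he μ)) hε fun μ => μ.2.2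

end ContinuousLinearMap

end

namespace ContinuousLinearMap

variable {H : Type*} [NormedAddCommGroup H] [InnerProductSpace ℝ H] [CompleteSpace H]
  {B : H →L[ℝ] H} {μ ν : ℝ} {x : H}

noncomputable abbrev singularSpace (B : H →L[ℝ] H) (μ : ℝ) : Submodule ℝ H :=
  eigenspace ((adjoint B ∘L B : H →L[ℝ] H) : End ℝ H) μ

def sqSingularValues (B : H →L[ℝ] H) : Set ℝ :=
  {μ | 0 < μ ∧ HasEigenvalue ((adjoint B ∘L B : H →L[ℝ] H) : End ℝ H) μ}

/-- The paper's `B_j`, for `λ_j = √μ` with `μ ∈ sqSingularValues B`. -/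
noncomputable def spectralComponent (B : H →L[ℝ] H) (μ : ℝ) : H →L[ℝ] H :=
  (√μ)⁻¹ • (B ∘L (singularSpace B μ).starProjection)

theorem mem_singularSpace_iff : x ∈ singularSpace B μ ↔ adjoint B (B x) = μ • x :=
  mem_eigenspace_iff

theorem isCompactOperator_adjoint_comp_self (hBc : IsCompactOperator B) :
    IsCompactOperator (adjoint B ∘L B) :=
  hBc.clm_comp (adjoint B)

theorem nonneg_of_hasEigenvalue_adjoint_comp_self
    (h : HasEigenvalue ((adjoint B ∘L B : H →L[ℝ] H) : End ℝ H) μ) : 0 ≤ μ :=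
  eigenvalue_nonneg_of_nonneg h fun x => by
    simpa [real_inner_comm] using ((isPositive_adjoint_comp_self B).inner_nonneg_left x)

theorem apply_mem_singularSpace (hB : adjoint B = -B) (hx : x ∈ singularSpace B μ) :
    B x ∈ singularSpace B μ := by
  rw [mem_singularSpace_iff] at hx ⊢
  have := congrArg B hx
  simp only [hB, neg_apply, map_neg, map_smul] at this ⊢
  exact this

theorem apply_apply_of_mem_singularSpace (hB : adjoint B = -B) (hx : x ∈ singularSpace B μ) :
    B (B x) = -(μ • x) := by
  rw [mem_singularSpace_iff, hB, neg_apply] at hx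
  rw [← hx, neg_neg]

theorem eq_zero_of_mem_singularSpace (hμ : μ ≠ 0) (hx : x ∈ singularSpace B μ)
    (hBx : B x = 0) : x = 0 := by
  rw [mem_singularSpace_iff, hBx, map_zero, eq_comm, smul_eq_zero] at hx
  exact hx.resolve_left hμ

theorem singularSpace_isOrtho (hμν : μ ≠ ν) : singularSpace B μ ⟂ singularSpace B ν :=
  (isPositive_adjoint_comp_self B).isSymmetric.orthogonalFamily_eigenspaces.isOrtho hμν

theorem commute_starProjection_singularSpace (hB : adjoint B = -B) :
    Commute (singularSpace B μ).starProjection B := by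
  have hinv : singularSpace B μ ∈ invtSubmodule (B : End ℝ H) :=
    (mem_invtSubmodule_iff_forall_mem_of_mem _).mpr fun _ => apply_mem_singularSpace hB
  have hinv' : singularSpace B μ ∈ invtSubmodule (adjoint B : End ℝ H) :=
    (mem_invtSubmodule_iff_forall_mem_of_mem _).mpr fun _ hx => by
      simpa [hB] using apply_mem_singularSpace hB hx
  rw [IsIdempotentElem.commute_iff (isIdempotentElem_starProjection _), range_starProjection,
    ker_starProjection]
  exact ⟨hinv, orthogonal_mem_invtSubmodule hinv'⟩

theorem spectralComponent_apply (x : H) :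
    spectralComponent B μ x = (√μ)⁻¹ • B ((singularSpace B μ).starProjection x) :=
  rfl

theorem spectralComponent_apply_mem (hB : adjoint B = -B) (x : H) :
    spectralComponent B μ x ∈ singularSpace B μ :=
  smul_mem _ _ (apply_mem_singularSpace hB (coe_mem _))

theorem spectralComponent_apply_of_mem (hx : x ∈ singularSpace B μ) :
    spectralComponent B μ x = (√μ)⁻¹ • B x := by
  rw [spectralComponent_apply, starProjection_eq_self_iff.mpr hx]

theorem spectralComponent_apply_apply_of_mem (hB : adjoint B = -B) (hμ : 0 < μ)
    (hx : x ∈ singularSpace B μ) : spectralComponent B μ (spectralComponent B μ x) = -x := by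
  rw [spectralComponent_apply_of_mem (spectralComponent_apply_mem hB x),
    spectralComponent_apply_of_mem hx, map_smul, apply_apply_of_mem_singularSpace hB hx,
    smul_neg, smul_neg, smul_smul, smul_smul, ← sq, inv_pow, Real.sq_sqrt hμ.le,
    inv_mul_cancel₀ hμ.ne', one_smul]

theorem adjoint_spectralComponent (hB : adjoint B = -B) :
    adjoint (spectralComponent B μ) = -spectralComponent B μ := by
  rw [spectralComponent, map_smulₛₗ, adjoint_comp, hB,
    (isSelfAdjoint_starProjection _).adjoint_eq, comp_neg, ← mul_def,
    (commute_starProjection_singularSpace hB).eq, mul_def]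
  simp

theorem spectralComponent_mul_self_mul_self (hB : adjoint B = -B) (hμ : 0 < μ) :
    spectralComponent B μ * spectralComponent B μ * spectralComponent B μ =
      -spectralComponent B μ := by
  ext x
  exact spectralComponent_apply_apply_of_mem hB hμ (spectralComponent_apply_mem hB x)

theorem spectralComponent_comp_spectralComponent (hB : adjoint B = -B) (hμν : μ ≠ ν) :
    spectralComponent B μ ∘L spectralComponent B ν = 0 := by
  ext x
  have hx : spectralComponent B ν x ∈ (singularSpace B μ)ᗮ :=
    (singularSpace_isOrtho hμν.symm).le (spectralComponent_apply_mem hB x)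
  rw [comp_apply, spectralComponent_apply, (starProjection_apply_eq_zero_iff _).mpr hx, map_zero,
    smul_zero, zero_apply]



theorem range_spectralComponent (hB : adjoint B = -B) (hμ : 0 < μ) :
    LinearMap.range (spectralComponent B μ : H →ₗ[ℝ] H) = singularSpace B μ := by
  refine le_antisymm ?_ fun y hy => ⟨-spectralComponent B μ y, ?_⟩
  · rintro _ ⟨x, rfl⟩
    exact spectralComponent_apply_mem hB x
  · rw [coe_coe, map_neg, spectralComponent_apply_apply_of_mem hB hμ hy, neg_neg]

theorem ker_spectralComponent (hμ : 0 < μ) :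
    LinearMap.ker (spectralComponent B μ : H →ₗ[ℝ] H) = (singularSpace B μ)ᗮ := by
  ext x
  rw [LinearMap.mem_ker, coe_coe, spectralComponent_apply, smul_eq_zero,
    ← starProjection_apply_eq_zero_iff, or_iff_right (by positivity)]
  exact ⟨eq_zero_of_mem_singularSpace hμ.ne' (coe_mem _), fun h => by rw [h, map_zero]⟩

theorem spectralComponent_ne_zero (hB : adjoint B = -B) (hμ : μ ∈ sqSingularValues B) :
    spectralComponent B μ ≠ 0 := fun h => by
  have hrange := range_spectralComponent hB hμ.1
  rw [h, toLinearMap_zero, LinearMap.range_zero] at hrange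
  exact hasEigenvalue_iff.mp hμ.2 hrange.symm

theorem sqrt_smul_spectralComponent (hμ : 0 < μ) :
    √μ • spectralComponent B μ = B ∘L (singularSpace B μ).starProjection := by
  rw [spectralComponent, smul_smul, mul_inv_cancel₀ (Real.sqrt_pos.mpr hμ).ne', one_smul]

theorem finiteDimensional_singularSpace (hBc : IsCompactOperator B) (hμ : μ ≠ 0) :
    FiniteDimensional ℝ (singularSpace B μ) :=
  finite_dimensional_eigenspace (isCompactOperator_adjoint_comp_self hBc) μ hμ

theorem even_finrank_singularSpace (hB : adjoint B = -B) (hBc : IsCompactOperator B)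
    (hμ : 0 < μ) : Even (finrank ℝ (singularSpace B μ)) := by
  have := finiteDimensional_singularSpace hBc hμ.ne'
  refine End.even_finrank_of_mul_self_eq_neg_one (f := (spectralComponent B μ : H →ₗ[ℝ] H).restrict
    fun x _ => spectralComponent_apply_mem hB x) ?_
  ext y
  exact spectralComponent_apply_apply_of_mem hB hμ y.2

theorem norm_apply_le_of_mem_orthogonal_iSup_singularSpace (hBc : IsCompactOperator B)
    (s : Set ℝ) {ε : ℝ} (hε : 0 ≤ ε)
    (h : ∀ μ ∉ s, HasEigenvalue ((adjoint B ∘L B : H →L[ℝ] H) : End ℝ H) μ → μ ≤ ε ^ 2)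
    (hx : x ∈ (⨆ μ ∈ s, singularSpace B μ)ᗮ) : ‖B x‖ ≤ ε * ‖x‖ := by
  have hT : ‖(adjoint B ∘L B) x‖ ≤ ε ^ 2 * ‖x‖ :=
    norm_apply_le_of_mem_orthogonal_iSup_eigenspace (isCompactOperator_adjoint_comp_self hBc)
      (isPositive_adjoint_comp_self B).isSelfAdjoint s (sq_nonneg ε) (fun μ hμs hμ => by
        rw [Real.norm_of_nonneg (nonneg_of_hasEigenvalue_adjoint_comp_self hμ)]
        exact h μ hμs hμ) hx
  refine le_of_pow_le_pow_left₀ two_ne_zero (by positivity) ?_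
  calc ‖B x‖ ^ 2 = ⟪(adjoint B ∘L B) x, x⟫ := by
        simpa using apply_norm_sq_eq_inner_adjoint_left B x
    _ ≤ ‖(adjoint B ∘L B) x‖ * ‖x‖ := real_inner_le_norm _ _
    _ ≤ ε ^ 2 * ‖x‖ * ‖x‖ := by gcongr
    _ = (ε * ‖x‖) ^ 2 := by ring

theorem finite_setOf_le_sqrt_sqSingularValues (hBc : IsCompactOperator B) {ε : ℝ} (hε : 0 < ε) :
    {j : sqSingularValues B | ε ≤ √(j : ℝ)}.Finite :=
  ((finite_setOf_hasEigenvalue_le_norm (isCompactOperator_adjoint_comp_self hBc)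
    (isPositive_adjoint_comp_self B).isSelfAdjoint (pow_pos hε 2)).preimage
      Subtype.val_injective.injOn).subset fun j hj =>
    ⟨j.2.2, by rw [Real.norm_of_nonneg j.2.1.le]; exact (Real.le_sqrt hε.le j.2.1.le).mp hj⟩

theorem ker_eq_iInf_ker_spectralComponent (hBc : IsCompactOperator B) :
    LinearMap.ker (B : H →ₗ[ℝ] H) =
      ⨅ j : sqSingularValues B, LinearMap.ker (spectralComponent B j : H →ₗ[ℝ] H) := by
  rw [iInf_congr fun j => ker_spectralComponent j.2.1, iInf_orthogonal]
  refine le_antisymm (fun x hx => ?_) fun x hx => ?_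
  · rw [← ker_adjoint_comp_self] at hx
    have hx0 : x ∈ singularSpace B 0 := by
      rw [mem_singularSpace_iff, zero_smul]
      exact hx
    rw [← iInf_orthogonal, mem_iInf]
    exact fun j => (singularSpace_isOrtho j.2.1.ne).le hx0
  · rw [iSup_subtype''] at hx
    have := norm_apply_le_of_mem_orthogonal_iSup_singularSpace hBc _ le_rfl
      (fun μ hμs hμ => by
        simpa using not_lt.mp fun hpos => hμs ⟨hpos, hμ⟩) hx
    rw [zero_mul, norm_le_zero_iff] at this
    exact this

theorem norm_sub_sum_spectralComponent_le (hBc : IsCompactOperator B)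
    {F : Finset (sqSingularValues B)} {ε : ℝ} (hε : 0 ≤ ε)
    (hF : ∀ j : sqSingularValues B, ε ≤ √(j : ℝ) → j ∈ F) :
    ‖B - ∑ j ∈ F, √(j : ℝ) • spectralComponent B j‖ ≤ ε := by
  have hV : OrthogonalFamily ℝ (fun j : sqSingularValues B => singularSpace B j)
      fun j => (singularSpace B j).subtypeₗᵢ :=
    (isPositive_adjoint_comp_self B).isSymmetric.orthogonalFamily_eigenspaces.comp
      Subtype.val_injective
  have hrem : B - ∑ j ∈ F, √(j : ℝ) • spectralComponent B j =
      B ∘L (⨆ j ∈ F, singularSpace B j)ᗮ.starProjection := by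
    rw [Finset.sum_congr rfl fun j _ => sqrt_smul_spectralComponent j.2.1]
    ext x
    simp [← hV.sub_sum_starProjection F x]
  rw [hrem]
  refine opNorm_le_bound _ hε fun x => ?_
  refine (norm_apply_le_of_mem_orthogonal_iSup_singularSpace hBc
    (Subtype.val '' (F : Set (sqSingularValues B))) hε
    (fun μ hμF hμ => not_lt.mp fun hlt => ?_) ?_).trans
    (mul_le_mul_of_nonneg_left (norm_starProjection_apply_le _ x) hε)
  · have hpos : 0 < μ := (sq_nonneg ε).trans_lt hlt
    exact hμF ⟨⟨μ, hpos, hμ⟩, hF _ ((Real.le_sqrt hε hpos.le).mpr hlt.le), rfl⟩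
  · rw [iSup_image]
    simp

theorem hasSum_spectralComponent (hBc : IsCompactOperator B) :
    HasSum (fun j : sqSingularValues B => √(j : ℝ) • spectralComponent B j) B := by
  rw [HasSum, SummationFilter.unconditional_filter, Metric.tendsto_atTop]
  intro ε hε
  refine ⟨(finite_setOf_le_sqrt_sqSingularValues hBc (half_pos hε)).toFinset, fun F hF => ?_⟩
  rw [dist_comm, dist_eq_norm]
  exact (norm_sub_sum_spectralComponent_le hBc (half_pos hε).le fun j hj =>
    hF (Set.Finite.mem_toFinset _ |>.mpr hj)).trans_lt (half_lt_self hε)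

end ContinuousLinearMap

open ContinuousLinearMap

theorem compact_skew_adjoint_spectral_decomposition_general
    {H : Type*} [NormedAddCommGroup H] [InnerProductSpace ℝ H] [CompleteSpace H]
    (B : H →L[ℝ] H) (hBcompact : IsCompactOperator (⇑B))
    (hBskew : ContinuousLinearMap.adjoint B = -B) :
    ∃ (J : Type) (_ : Countable J) (lam : J → ℝ) (Bop : J → H →L[ℝ] H),
      (∀ j, 0 < lam j) ∧
      Function.Injective lam ∧
      (∀ ε : ℝ, 0 < ε → {j | ε ≤ lam j}.Finite) ∧
      (∀ j, Bop j ≠ 0) ∧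
      (∀ j, ContinuousLinearMap.adjoint (Bop j) = -(Bop j)) ∧
      (∀ j, Bop j * Bop j * Bop j = -(Bop j)) ∧
      (∀ j k, j ≠ k → Bop j ∘L Bop k = 0) ∧
      HasSum (fun j => lam j • Bop j) B ∧
      (∀ j, FiniteDimensional ℝ (LinearMap.range (Bop j : H →ₗ[ℝ] H))) ∧
      (∀ j, Even (Module.finrank ℝ (LinearMap.range (Bop j : H →ₗ[ℝ] H)))) ∧
      (∀ j k, j ≠ k → ∀ x ∈ LinearMap.range (Bop j : H →ₗ[ℝ] H), ∀ y ∈ LinearMap.range (Bop k : H →ₗ[ℝ] H),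
        ⟪x, y⟫ = 0) ∧
      LinearMap.ker (B : H →ₗ[ℝ] H) = ⨅ j, LinearMap.ker (Bop j : H →ₗ[ℝ] H) := by
  have hrange (j : sqSingularValues B) := range_spectralComponent hBskew j.2.1
  have hpos (j : sqSingularValues B) : 0 < √(j : ℝ) := Real.sqrt_pos.mpr j.2.1
  refine ⟨sqSingularValues B,
    countable_of_finite_setOf_le _ hpos fun _ => finite_setOf_le_sqrt_sqSingularValues hBcompact,
    fun j => √(j : ℝ), fun j => spectralComponent B j, hpos,
    fun j k h => Subtype.ext ((Real.sqrt_inj j.2.1.le k.2.1.le).mp h),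
    fun _ => finite_setOf_le_sqrt_sqSingularValues hBcompact,
    fun j => spectralComponent_ne_zero hBskew j.2,
    fun _ => adjoint_spectralComponent hBskew,
    fun j => spectralComponent_mul_self_mul_self hBskew j.2.1,
    fun j k hjk => spectralComponent_comp_spectralComponent hBskew (Subtype.val_injective.ne hjk),
    hasSum_spectralComponent hBcompact, fun j => ?_, fun j => ?_, fun j k hjk => ?_,
    ker_eq_iInf_ker_spectralComponent hBcompact⟩
  · rw [hrange]
    exact finiteDimensional_singularSpace hBcompact j.2.1.ne'
  · rw [hrange]
    exact even_finrank_singularSpace hBskew hBcompact j.2.1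
  · rw [hrange, hrange]
    exact isOrtho_iff_inner_eq.mp (singularSpace_isOrtho (Subtype.val_injective.ne hjk))

/-- Spectral decomposition of a nonzero compact skew-adjoint operator on a real Hilbert
space: `B = Σ_j λ_j • B_j` (norm-convergent), where the `λ_j` are distinct positive reals
with only finitely many above each `ε > 0` (i.e. a strictly decreasing family tending to
`0` when infinite), and the `B_j` are nonzero finite-rank skew-adjoint operators with
`B_j³ = -B_j`, `B_j ∘ B_k = 0` for `j ≠ k`, pairwise orthogonal even-dimensional ranges,
and `ker B = ⋂_j ker B_j`. -/
theorem compact_skew_adjoint_spectral_decomposition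
    {H : Type*} [NormedAddCommGroup H] [InnerProductSpace ℝ H] [CompleteSpace H]
    (B : H →L[ℝ] H) (hB0 : B ≠ 0) (hBcompact : IsCompactOperator (⇑B))
    (hBskew : ContinuousLinearMap.adjoint B = -B) :
    ∃ (J : Type) (_ : Countable J) (lam : J → ℝ) (Bop : J → H →L[ℝ] H),
      (∀ j, 0 < lam j) ∧
      Function.Injective lam ∧
      (∀ ε : ℝ, 0 < ε → {j | ε ≤ lam j}.Finite) ∧
      (∀ j, Bop j ≠ 0) ∧
      (∀ j, ContinuousLinearMap.adjoint (Bop j) = -(Bop j)) ∧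
      (∀ j, Bop j * Bop j * Bop j = -(Bop j)) ∧
      (∀ j k, j ≠ k → Bop j ∘L Bop k = 0) ∧
      HasSum (fun j => lam j • Bop j) B ∧
      (∀ j, FiniteDimensional ℝ (LinearMap.range (Bop j : H →ₗ[ℝ] H))) ∧
      (∀ j, Even (Module.finrank ℝ (LinearMap.range (Bop j : H →ₗ[ℝ] H)))) ∧
      (∀ j k, j ≠ k → ∀ x ∈ LinearMap.range (Bop j : H →ₗ[ℝ] H), ∀ y ∈ LinearMap.range (Bop k : H →ₗ[ℝ] H),
        ⟪x, y⟫ = 0) ∧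
      LinearMap.ker (B : H →ₗ[ℝ] H) = ⨅ j, LinearMap.ker (Bop j : H →ₗ[ℝ] H) :=
  compact_skew_adjoint_spectral_decomposition_general B hBcompact hBskew
end

section
/- Let v ∈ H with v ≠ 0, let α = arsinh(‖v‖) (so sinh α = ‖v‖) and u = (α/‖v‖)·v. Then exp(U_u) = T_v. In particular, every boost on ℋ = ℝ × H is the exponential of an operator of the form U_u with u ∈ H. -/
/-!
Since `U_u³ = ‖u‖² U_u`, the exponential series of `U_u` collapses onto `1`, `U_u` and `U_u²`,
with the odd and even parts of the series summing to `sinh α / α` and `(cosh α - 1) / α²`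
for `α = ‖u‖`. Taking `u = (arsinh ‖v‖ / ‖v‖) v` gives `sinh α = ‖v‖` and `cosh α = c_v`, and
`T_v = 1 + U_v + ((c_v - 1) / ‖v‖²) U_v²` is exactly this closed form.
-/

open scoped RealInnerProductSpace

set_option synthInstance.maxHeartbeats 400000
set_option maxHeartbeats 1000000

noncomputable section

variable {H : Type*} [NormedAddCommGroup H] [InnerProductSpace ℝ H]

/-- The operator `U_u (s,x) = (⟪u,x⟫, s•u)` on `ℝ × H`. -/
def Uop (u : H) : (ℝ × H) →L[ℝ] (ℝ × H) :=
  ((innerSL ℝ u).comp (ContinuousLinearMap.snd ℝ ℝ H)).prod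
    ((ContinuousLinearMap.fst ℝ ℝ H).smulRight u)

instance : IsTopologicalRing ((ℝ × H) →L[ℝ] (ℝ × H)) :=
  @NonUnitalSeminormedRing.toIsTopologicalRing ((ℝ × H) →L[ℝ] (ℝ × H)) _

open scoped Nat

section PowThree

variable {R 𝔸 : Type*} [CommSemiring R] [Semiring 𝔸] [Algebra R 𝔸] {A : 𝔸} {c : R}

theorem pow_two_mul_add_one_of_pow_three_eq_smul (h : A ^ 3 = c • A) (k : ℕ) :
    A ^ (2 * k + 1) = c ^ k • A := by
  induction k with
  | zero => simp
  | succ k ih =>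
    rw [show 2 * (k + 1) + 1 = 3 + 2 * k by ring, pow_add, h, smul_mul_assoc,
      ← pow_succ', ih, smul_smul, pow_succ']

theorem pow_two_mul_add_two_of_pow_three_eq_smul (h : A ^ 3 = c • A) (k : ℕ) :
    A ^ (2 * k + 2) = c ^ k • A ^ 2 := by
  rw [pow_succ, pow_two_mul_add_one_of_pow_three_eq_smul h, smul_mul_assoc, ← pow_two]

end PowThree

section Exp

variable {𝔸 : Type*} [NormedRing 𝔸] [NormedAlgebra ℝ 𝔸] {A : 𝔸} {α : ℝ}

theorem hasSum_expSeries_odd_of_pow_three_eq_sq_smul (hα : α ≠ 0) (h : A ^ 3 = α ^ 2 • A) :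
    HasSum (fun k : ℕ ↦ ((2 * k + 1)! : ℝ)⁻¹ • A ^ (2 * k + 1)) ((Real.sinh α / α) • A) := by
  refine (((Real.hasSum_sinh α).div_const α).smul_const A).congr_fun fun k ↦ ?_
  rw [pow_two_mul_add_one_of_pow_three_eq_smul h, smul_smul, ← pow_mul, pow_succ]
  field_simp

theorem hasSum_expSeries_even_of_pow_three_eq_sq_smul (hα : α ≠ 0) (h : A ^ 3 = α ^ 2 • A) :
    HasSum (fun k : ℕ ↦ ((2 * k)! : ℝ)⁻¹ • A ^ (2 * k))
      (((Real.cosh α - 1) / α ^ 2) • A ^ 2 + 1) := by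
  have hcosh : HasSum (fun k : ℕ ↦ α ^ (2 * (k + 1)) / (2 * (k + 1))!) (Real.cosh α - 1) := by
    refine (hasSum_nat_add_iff (f := fun k : ℕ ↦ α ^ (2 * k) / (2 * k)!) 1).2 ?_
    simpa using Real.hasSum_cosh α
  have htail : HasSum (fun k : ℕ ↦ ((2 * (k + 1))! : ℝ)⁻¹ • A ^ (2 * (k + 1)))
      (((Real.cosh α - 1) / α ^ 2) • A ^ 2) := by
    refine ((hcosh.div_const (α ^ 2)).smul_const (A ^ 2)).congr_fun fun k ↦ ?_
    rw [mul_add_one, pow_two_mul_add_two_of_pow_three_eq_smul h, smul_smul, ← pow_mul, pow_add]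
    field_simp
  simpa using (hasSum_nat_add_iff (f := fun k : ℕ ↦ ((2 * k)! : ℝ)⁻¹ • A ^ (2 * k)) 1).1 htail

theorem exp_eq_of_pow_three_eq_sq_smul (hα : α ≠ 0) (h : A ^ 3 = α ^ 2 • A) :
    NormedSpace.exp A =
      1 + (Real.sinh α / α) • A + ((Real.cosh α - 1) / α ^ 2) • A ^ 2 := by
  have hseries := HasSum.even_add_odd (f := fun n : ℕ ↦ (n ! : ℝ)⁻¹ • A ^ n)
    (hasSum_expSeries_even_of_pow_three_eq_sq_smul hα h)
    (hasSum_expSeries_odd_of_pow_three_eq_sq_smul hα h)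
  exact (congrFun (NormedSpace.exp_eq_tsum ℝ) A).trans (hseries.tsum_eq.trans (by abel))

end Exp

theorem Uop_apply (u : H) (p : ℝ × H) : Uop u p = (⟪u, p.2⟫, p.1 • u) := rfl

@[simp]
theorem Uop_zero : Uop (0 : H) = 0 := by
  refine ContinuousLinearMap.ext fun p ↦ Prod.ext ?_ ?_ <;> simp [Uop_apply]

theorem Uop_smul (c : ℝ) (u : H) : Uop (c • u) = c • Uop u := by
  refine ContinuousLinearMap.ext fun p ↦ Prod.ext ?_ ?_ <;>
    simp [Uop_apply, real_inner_smul_left, smul_smul, mul_comm]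

theorem Uop_sq_apply (u : H) (p : ℝ × H) : (Uop u ^ 2) p = (‖u‖ ^ 2 * p.1, ⟪u, p.2⟫ • u) := by
  simp [pow_two, Uop_apply, real_inner_smul_right, mul_comm]

theorem Uop_pow_three (u : H) : Uop u ^ 3 = ‖u‖ ^ 2 • Uop u := by
  refine ContinuousLinearMap.ext fun p ↦ ?_
  rw [pow_succ, mul_apply_eq_comp, Uop_apply, Uop_sq_apply]
  simp [Uop_apply, real_inner_smul_right, smul_smul, mul_comm]

@[simp]
theorem boost_zero : boost (0 : H) = 1 := by
  simp [boost, ContinuousLinearMap.one_def]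

theorem boost_eq_one_add_Uop_add_smul_sq {v : H} (hv : v ≠ 0) :
    boost v = 1 + Uop v + ((√(1 + ‖v‖ ^ 2) - 1) / ‖v‖ ^ 2) • Uop v ^ 2 := by
  have hv' : ‖v‖ ≠ 0 := norm_ne_zero_iff.2 hv
  refine ContinuousLinearMap.ext fun p ↦ ?_
  rw [add_apply, smul_apply, Uop_sq_apply]
  refine Prod.ext ?_ ?_
  · simp [boost, hv, Uop_apply]
    field_simp
    ring
  · simp [boost, hv, Uop_apply, rankOne, smul_smul]
    abel

theorem exp_Uop_arsinh_smul_eq_boost {v : H} (hv : v ≠ 0) :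
    NormedSpace.exp (Uop ((Real.arsinh ‖v‖ / ‖v‖) • v)) = boost v := by
  set α := Real.arsinh ‖v‖
  have hv' : 0 < ‖v‖ := norm_pos_iff.2 hv
  have hα : 0 < α := Real.arsinh_pos_iff.2 hv'
  have hnorm : ‖(α / ‖v‖) • v‖ = α := by
    rw [norm_smul, Real.norm_of_nonneg (by positivity), div_mul_cancel₀ _ hv'.ne']
  have hcube : Uop ((α / ‖v‖) • v) ^ 3 = α ^ 2 • Uop ((α / ‖v‖) • v) := by
    rw [Uop_pow_three, hnorm]
  have hsinh : ‖v‖ / α * (α / ‖v‖) = 1 := by field_simp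
  have hcosh : (√(1 + ‖v‖ ^ 2) - 1) / α ^ 2 * (α / ‖v‖) ^ 2 = (√(1 + ‖v‖ ^ 2) - 1) / ‖v‖ ^ 2 := by
    field_simp
  refine (exp_eq_of_pow_three_eq_sq_smul (𝔸 := (ℝ × H) →L[ℝ] (ℝ × H)) hα.ne' hcube).trans ?_
  rw [Real.sinh_arsinh, Real.cosh_arsinh, boost_eq_one_add_Uop_add_smul_sq hv, Uop_smul,
    smul_pow, smul_smul, smul_smul, hsinh, hcosh, one_smul]

theorem exp_Uop_eq_boost_general
    (v : H) (hv : v ≠ 0) (α : ℝ) (hα : α = Real.arsinh ‖v‖)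
    (u : H) (hu : u = (α / ‖v‖) • v) :
    NormedSpace.exp (Uop u) = boost v ∧
      ∀ w : H, ∃ u' : H, NormedSpace.exp (Uop u') = boost w := by
  refine ⟨hu ▸ hα ▸ exp_Uop_arsinh_smul_eq_boost hv, fun w ↦ ?_⟩
  by_cases hw : w = 0
  · exact ⟨0, by simp [hw, NormedSpace.exp_zero]⟩
  · exact ⟨_, exp_Uop_arsinh_smul_eq_boost hw⟩

/-- For `v ≠ 0`, `α = arsinh ‖v‖` and `u = (α/‖v‖) • v`, one has `exp (U_u) = T_v`.
In particular every boost is the exponential of an operator of the form `U_u`. -/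
theorem exp_Uop_eq_boost [CompleteSpace H]
    (v : H) (hv : v ≠ 0) (α : ℝ) (hα : α = Real.arsinh ‖v‖)
    (u : H) (hu : u = (α / ‖v‖) • v) :
    NormedSpace.exp (Uop u) = boost v ∧
      ∀ w : H, ∃ u' : H, NormedSpace.exp (Uop u') = boost w :=
  exp_Uop_eq_boost_general v hv α hα u hu
end
end

section
/- Let A be a bounded linear operator on ℋ = ℝ × H with block data (c, u, v, B). Then A preserves the Lorentz form if and only if the following three relations hold: B*∘B = id_H + v⊗v, ‖u‖² = c² − 1, and B* u = c·v. -/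
open scoped RealInnerProductSpace

noncomputable section

variable {H : Type*} [NormedAddCommGroup H] [InnerProductSpace ℝ H]

/-!
In block data, `⟨A(s,x), A(t,y)⟩_L - ⟨(s,x),(t,y)⟩_L` is affine in `s` and in `t`, with
coefficients `‖u‖² - c² + 1`, `⟪u, B ·⟫ - c ⟪v, ·⟫` and `⟪B x, B y⟫ - ⟪x, y⟫ - ⟪v, x⟫ ⟪v, y⟫`.
Testing at `(1,0),(1,0)`, at `(1,0),(0,y)` and at `(0,x),(0,y)` isolates them, so `A` preserves
the form iff all three vanish; through the adjoint these are the three block relations.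
-/
theorem rankOne_apply (a b x : H) : rankOne a b x = ⟪b, x⟫ • a := rfl

section Adjoint

variable [CompleteSpace H]

theorem adjoint_comp_self_eq_id_add_rankOne_iff (B : H →L[ℝ] H) (v : H) :
    ContinuousLinearMap.adjoint B ∘L B = ContinuousLinearMap.id ℝ H + rankOne v v ↔
      ∀ x y, ⟪B x, B y⟫ = ⟪x, y⟫ + ⟪v, x⟫ * ⟪v, y⟫ := by
  refine ContinuousLinearMap.ext_iff.trans (forall_congr' fun x => ?_)
  rw [ext_iff_inner_right ℝ]
  simp only [ContinuousLinearMap.comp_apply, ContinuousLinearMap.adjoint_inner_left,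
    add_apply, ContinuousLinearMap.id_apply, rankOne_apply,
    inner_add_left, real_inner_smul_left]

theorem adjoint_apply_eq_smul_iff (B : H →L[ℝ] H) (u v : H) (c : ℝ) :
    ContinuousLinearMap.adjoint B u = c • v ↔ ∀ y, ⟪u, B y⟫ = c * ⟪v, y⟫ := by
  rw [ext_iff_inner_right ℝ]
  simp only [ContinuousLinearMap.adjoint_inner_left, real_inner_smul_left]

end Adjoint

section BlockMap

variable (c : ℝ) (u v : H) (B : H →L[ℝ] H)

def blockMap (z : ℝ × H) : ℝ × H := (c * z.1 + ⟪v, z.2⟫, z.1 • u + B z.2)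

theorem lorentzInner_blockMap_sub (s t : ℝ) (x y : H) :
    lorentzInner (blockMap c u v B (s, x)) (blockMap c u v B (t, y)) - lorentzInner (s, x) (t, y)
      = s * t * (‖u‖ ^ 2 - (c ^ 2 - 1)) + s * (⟪u, B y⟫ - c * ⟪v, y⟫)
        + t * (⟪u, B x⟫ - c * ⟪v, x⟫) + (⟪B x, B y⟫ - (⟪x, y⟫ + ⟪v, x⟫ * ⟪v, y⟫)) := by
  simp only [blockMap, lorentzInner, inner_add_left, inner_add_right, real_inner_smul_left,
    real_inner_smul_right, real_inner_self_eq_norm_sq, real_inner_comm u (B x)]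
  ring

theorem blockMap_preserves_lorentzInner_iff :
    (∀ z w, lorentzInner (blockMap c u v B z) (blockMap c u v B w) = lorentzInner z w) ↔
      (∀ x y, ⟪B x, B y⟫ = ⟪x, y⟫ + ⟪v, x⟫ * ⟪v, y⟫) ∧ ‖u‖ ^ 2 = c ^ 2 - 1 ∧
        ∀ y, ⟪u, B y⟫ = c * ⟪v, y⟫ := by
  have expand := lorentzInner_blockMap_sub c u v B
  constructor
  · intro h
    have defect_zero : ∀ s t x y, s * t * (‖u‖ ^ 2 - (c ^ 2 - 1)) + s * (⟪u, B y⟫ - c * ⟪v, y⟫)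
        + t * (⟪u, B x⟫ - c * ⟪v, x⟫) + (⟪B x, B y⟫ - (⟪x, y⟫ + ⟪v, x⟫ * ⟪v, y⟫)) = 0 :=
      fun s t x y => by rw [← expand, h, sub_self]
    refine ⟨fun x y => ?_, ?_, fun y => ?_⟩
    · simpa [sub_eq_zero] using defect_zero 0 0 x y
    · simpa [sub_eq_zero] using defect_zero 1 1 0 0
    · simpa [sub_eq_zero] using defect_zero 1 0 0 y
  · rintro ⟨hB, hu, huB⟩ ⟨s, x⟩ ⟨t, y⟩
    rw [← sub_eq_zero, expand]
    simp [hB, hu, huB]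

end BlockMap

/-- A bounded operator `A` on `ℝ × H` with block data `(c,u,v,B)` preserves the Lorentz form
iff `B* ∘ B = id + v ⊗ v`, `‖u‖² = c² - 1` and `B* u = c • v`. -/
theorem preserves_lorentz_iff_block_relations [CompleteSpace H]
    (A : (ℝ × H) →L[ℝ] (ℝ × H)) (c : ℝ) (u v : H) (B : H →L[ℝ] H)
    (hblock : ∀ (s : ℝ) (x : H), A (s, x) = (c * s + ⟪v, x⟫, s • u + B x)) :
    (∀ z w : ℝ × H, lorentzInner (A z) (A w) = lorentzInner z w) ↔
      (ContinuousLinearMap.adjoint B ∘L B = ContinuousLinearMap.id ℝ H + rankOne v v ∧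
        ‖u‖ ^ 2 = c ^ 2 - 1 ∧
        ContinuousLinearMap.adjoint B u = c • v) := by
  have hA : ⇑A = blockMap c u v B := funext fun z => hblock z.1 z.2
  rw [hA, blockMap_preserves_lorentzInner_iff, adjoint_comp_self_eq_id_add_rankOne_iff,
    adjoint_apply_eq_smul_iff]
end
end

section
/- Let A be a bounded linear operator on ℋ = ℝ × H with block data (c, u, v, B) that preserves the Lorentz form. If A is surjective, then in addition B∘B* = id_H + u⊗u, ‖v‖² = c² − 1, and B v = c·u. -/
/-!
Writing `J = diag(-1, 1)`, preservation of the Lorentz form says `J A* J A = 1`, so the Lorentz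
adjoint `J A* J` is a left inverse of `A`. For surjective `A` a left inverse is also a right
inverse, and the three relations are the blocks of `A (J A* J) = 1`.
-/

open scoped RealInnerProductSpace

noncomputable section

variable {H : Type*} [NormedAddCommGroup H] [InnerProductSpace ℝ H]

open ContinuousLinearMap

section BlockRelations

variable {A : (ℝ × H) →L[ℝ] (ℝ × H)} {c : ℝ} {u v : H} {B : H →L[ℝ] H}

theorem inner_self_sub_mul_self_of_preserves_lorentz
    (hblock : ∀ (s : ℝ) (x : H), A (s, x) = (c * s + ⟪v, x⟫, s • u + B x))
    (hL : ∀ z w : ℝ × H, lorentzInner (A z) (A w) = lorentzInner z w) :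
    ⟪u, u⟫ - c * c = -1 := by
  simpa [hblock, lorentzInner] using hL (1, 0) (1, 0)

theorem inner_apply_of_preserves_lorentz
    (hblock : ∀ (s : ℝ) (x : H), A (s, x) = (c * s + ⟪v, x⟫, s • u + B x))
    (hL : ∀ z w : ℝ × H, lorentzInner (A z) (A w) = lorentzInner z w) (y : H) :
    ⟪u, B y⟫ = c * ⟪v, y⟫ := by
  have h := hL (1, 0) (0, y)
  simp only [hblock, lorentzInner, inner_zero_right, inner_zero_left, map_zero, mul_zero,
    mul_one, add_zero, zero_add, zero_smul, one_smul] at h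
  linarith

theorem inner_apply_apply_of_preserves_lorentz
    (hblock : ∀ (s : ℝ) (x : H), A (s, x) = (c * s + ⟪v, x⟫, s • u + B x))
    (hL : ∀ z w : ℝ × H, lorentzInner (A z) (A w) = lorentzInner z w) (x y : H) :
    ⟪B x, B y⟫ = ⟪x, y⟫ + ⟪v, x⟫ * ⟪v, y⟫ := by
  have h := hL (0, x) (0, y)
  simp only [hblock, lorentzInner, mul_zero, zero_add, zero_smul, sub_zero] at h
  linarith

variable [CompleteSpace H]

theorem adjoint_apply_of_preserves_lorentz
    (hblock : ∀ (s : ℝ) (x : H), A (s, x) = (c * s + ⟪v, x⟫, s • u + B x))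
    (hL : ∀ z w : ℝ × H, lorentzInner (A z) (A w) = lorentzInner z w) :
    adjoint B u = c • v :=
  ext_inner_right ℝ fun y => by
    rw [adjoint_inner_left, inner_apply_of_preserves_lorentz hblock hL, real_inner_smul_left]

theorem adjoint_apply_apply_of_preserves_lorentz
    (hblock : ∀ (s : ℝ) (x : H), A (s, x) = (c * s + ⟪v, x⟫, s • u + B x))
    (hL : ∀ z w : ℝ × H, lorentzInner (A z) (A w) = lorentzInner z w) (x : H) :
    adjoint B (B x) = x + ⟪v, x⟫ • v :=
  ext_inner_right ℝ fun y => by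
    rw [adjoint_inner_left, inner_apply_apply_of_preserves_lorentz hblock hL, inner_add_left,
      real_inner_smul_left]

/-- `J A* J` for the operator `A` with block data `(c, u, v, B)`, where `J = diag(-1, 1)`:
its block data is `(c, -u, -v, B*)`. -/
def lorentzAdjointBlock (c : ℝ) (u v : H) (B : H →L[ℝ] H) (w : ℝ × H) : ℝ × H :=
  (c * w.1 - ⟪u, w.2⟫, (-w.1) • v + adjoint B w.2)

theorem lorentzAdjointBlock_leftInverse
    (hblock : ∀ (s : ℝ) (x : H), A (s, x) = (c * s + ⟪v, x⟫, s • u + B x))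
    (hL : ∀ z w : ℝ × H, lorentzInner (A z) (A w) = lorentzInner z w) :
    Function.LeftInverse (lorentzAdjointBlock c u v B) A := by
  rintro ⟨s, x⟩
  rw [hblock, lorentzAdjointBlock]
  refine Prod.ext ?_ ?_
  · change c * (c * s + ⟪v, x⟫) - ⟪u, s • u + B x⟫ = s
    rw [inner_add_right, real_inner_smul_right, inner_apply_of_preserves_lorentz hblock hL]
    linear_combination (-s) * inner_self_sub_mul_self_of_preserves_lorentz hblock hL
  · change (-(c * s + ⟪v, x⟫)) • v + adjoint B (s • u + B x) = x
    rw [map_add, map_smul, adjoint_apply_of_preserves_lorentz hblock hL,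
      adjoint_apply_apply_of_preserves_lorentz hblock hL, smul_smul]
    module

theorem norm_sq_eq_and_apply_eq_of_rightInverse
    (hblock : ∀ (s : ℝ) (x : H), A (s, x) = (c * s + ⟪v, x⟫, s • u + B x))
    (hright : Function.RightInverse (lorentzAdjointBlock c u v B) A) :
    ‖v‖ ^ 2 = c ^ 2 - 1 ∧ B v = c • u := by
  have h := hright (1, 0)
  simp only [lorentzAdjointBlock, mul_one, inner_zero_right, sub_zero, map_zero, add_zero,
    neg_smul, one_smul, hblock, inner_neg_right, real_inner_self_eq_norm_sq, map_neg,
    Prod.mk.injEq] at h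
  obtain ⟨hfst, hsnd⟩ := h
  exact ⟨by linarith, by linear_combination (norm := module) -hsnd⟩

theorem comp_adjoint_eq_of_rightInverse
    (hblock : ∀ (s : ℝ) (x : H), A (s, x) = (c * s + ⟪v, x⟫, s • u + B x))
    (hright : Function.RightInverse (lorentzAdjointBlock c u v B) A) :
    B ∘L adjoint B = ContinuousLinearMap.id ℝ H + rankOne u u := by
  ext y
  have h := congrArg Prod.snd (hright (0, y))
  simp only [lorentzAdjointBlock, mul_zero, zero_sub, neg_zero, zero_smul, zero_add,
    hblock] at h
  simp only [comp_apply, add_apply, id_apply, rankOne, smulRight_apply, innerSL_apply_apply]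
  linear_combination (norm := module) h

end BlockRelations

/-- If a bounded operator `A` on `ℝ × H` with block data `(c,u,v,B)` preserves the Lorentz
form and is surjective, then in addition `B ∘ B* = id + u ⊗ u`, `‖v‖² = c² - 1` and
`B v = c • u`. -/
theorem preserves_lorentz_surjective_block_relations [CompleteSpace H]
    (A : (ℝ × H) →L[ℝ] (ℝ × H)) (c : ℝ) (u v : H) (B : H →L[ℝ] H)
    (hblock : ∀ (s : ℝ) (x : H), A (s, x) = (c * s + ⟪v, x⟫, s • u + B x))
    (hL : ∀ z w : ℝ × H, lorentzInner (A z) (A w) = lorentzInner z w)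
    (hsurj : Function.Surjective A) :
    B ∘L ContinuousLinearMap.adjoint B = ContinuousLinearMap.id ℝ H + rankOne u u ∧
      ‖v‖ ^ 2 = c ^ 2 - 1 ∧
      B v = c • u := by
  have hright : Function.RightInverse (lorentzAdjointBlock c u v B) A :=
    (lorentzAdjointBlock_leftInverse hblock hL).rightInverse_of_surjective hsurj
  exact ⟨comp_adjoint_eq_of_rightInverse hblock hright,
    norm_sq_eq_and_apply_eq_of_rightInverse hblock hright⟩
end
end

section
/- Let H be a real Hilbert space, v ∈ H with ‖v‖ = 1, and x ∈ H with ‖x‖ = 1 and x ≠ v. Set y = (x − ⟪v,x⟫·v)/(1 − ⟪v,x⟫), and for t ∈ ℝ define γ(t) = ((e^{2t}‖y‖² − 1)/(e^{2t}‖y‖² + 1))·v + (2e^{t}/(e^{2t}‖y‖² + 1))·y. Then ⟪v,y⟫ = 0, γ(0) = x, ‖γ(t)‖ = 1 for all t, and for every t the map γ has derivative at t equal to v − ⟪v, γ(t)⟫·γ(t). -/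
open scoped RealInnerProductSpace

noncomputable section

/-- The gradient flow on the unit sphere of `z ↦ ⟪v,z⟫` is conjugate, under stereographic
projection from the pole `v`, to the dilations `y ↦ e^t • y`: the curve
`γ(t) = ((e^{2t}‖y‖² - 1)/(e^{2t}‖y‖² + 1)) • v + (2 e^t/(e^{2t}‖y‖² + 1)) • y`, where `y`
is the stereographic projection of `x`, stays on the unit sphere, starts at `x`, and solves
`γ' = v - ⟪v,γ⟫ • γ`. -/
theorem gradient_flow_on_sphere_via_stereographic
    {H : Type*} [NormedAddCommGroup H] [InnerProductSpace ℝ H]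
    (v x : H) (hv : ‖v‖ = 1) (hx : ‖x‖ = 1) (hxv : x ≠ v)
    (y : H) (hy : y = (1 - ⟪v, x⟫)⁻¹ • (x - ⟪v, x⟫ • v))
    (γ : ℝ → H)
    (hγ : ∀ t : ℝ, γ t =
      ((Real.exp (2 * t) * ‖y‖ ^ 2 - 1) / (Real.exp (2 * t) * ‖y‖ ^ 2 + 1)) • v +
        (2 * Real.exp t / (Real.exp (2 * t) * ‖y‖ ^ 2 + 1)) • y) :
    ⟪v, y⟫ = 0 ∧ γ 0 = x ∧ (∀ t : ℝ, ‖γ t‖ = 1) ∧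
      ∀ t : ℝ, HasDerivAt γ (v - ⟪v, γ t⟫ • γ t) t := by
  set c : ℝ := ⟪v, x⟫ with hc
  have hvv : ⟪v, v⟫ = 1 := by
    rw [real_inner_self_eq_norm_sq, hv]; norm_num
  have hc1 : c ≠ 1 := by
    intro h
    exact hxv ((inner_eq_one_iff_of_norm_eq_one hv hx).mp (hc ▸ h)).symm
  have hcle : c < 1 := lt_of_le_of_ne (by
    have := real_inner_le_norm v x
    rw [hv, hx] at this; simpa using this) hc1
  have hcge : -1 ≤ c := by
    have := abs_real_inner_le_norm v x
    rw [hv, hx] at this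
    simp only [mul_one] at this
    linarith [neg_abs_le c]
  have h1c : (1 : ℝ) - c ≠ 0 := by linarith
  -- orthogonality
  have hvy : ⟪v, y⟫ = 0 := by
    rw [hy, real_inner_smul_right, inner_sub_right, real_inner_smul_right, hvv, ← hc]
    ring
  -- norm of y
  have hxx : ⟪x, x⟫ = 1 := by rw [real_inner_self_eq_norm_sq, hx]; norm_num
  have hxv' : ⟪x, v⟫ = c := by rw [real_inner_comm]
  have hs : ‖y‖ ^ 2 = (1 + c) / (1 - c) := by
    rw [← real_inner_self_eq_norm_sq, hy]
    rw [real_inner_smul_left, real_inner_smul_right, inner_sub_left, inner_sub_right,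
      inner_sub_right, real_inner_smul_left, real_inner_smul_left, real_inner_smul_right,
      real_inner_smul_right, hxx, hvv, hxv', ← hc]
    field_simp
    ring
  set s : ℝ := ‖y‖ ^ 2 with hsdef
  have hs0 : 0 ≤ s := sq_nonneg _
  have hu : ∀ t : ℝ, Real.exp (2 * t) * s + 1 ≠ 0 := by
    intro t
    have := Real.exp_pos (2 * t)
    nlinarith
  refine ⟨hvy, ?_, ?_, ?_⟩
  · -- γ 0 = x
    rw [hγ 0]
    have e0 : Real.exp (2 * 0) = 1 := by norm_num
    have e0' : Real.exp (0 : ℝ) = 1 := Real.exp_zero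
    rw [e0, e0']
    have h1 : (1 * s - 1) / (1 * s + 1) = c := by
      rw [hs]; field_simp; ring
    have h2 : 2 * 1 / (1 * s + 1) = 1 - c := by
      rw [hs]; field_simp; ring
    rw [h1, h2, hy, smul_smul]
    have h3 : (1 - c) * (1 - c)⁻¹ = 1 := mul_inv_cancel₀ h1c
    rw [h3, one_smul]
    abel
  · -- norm 1
    intro t
    have hsq : ‖γ t‖ ^ 2 = 1 := by
      rw [hγ t, norm_add_sq_real, real_inner_smul_left, real_inner_smul_right, hvy,
        norm_smul, norm_smul, mul_pow, mul_pow, Real.norm_eq_abs, Real.norm_eq_abs,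
        sq_abs, sq_abs, hv, ← hsdef]
      have h2t : Real.exp t ^ 2 = Real.exp (2 * t) := by
        rw [sq, ← Real.exp_add]; ring_nf
      have hut := hu t
      field_simp
      rw [h2t]
      ring
    have h0 : 0 ≤ ‖γ t‖ := norm_nonneg _
    nlinarith
  · -- derivative
    intro t
    have hut : Real.exp (2 * t) * s + 1 ≠ 0 := hu t
    have hexp2 : HasDerivAt (fun r : ℝ => Real.exp (2 * r)) (Real.exp (2 * t) * 2) t :=
      (Real.hasDerivAt_exp (2 * t)).comp t (by simpa using (hasDerivAt_id t).const_mul (2:ℝ))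
    have hnum : HasDerivAt (fun r : ℝ => Real.exp (2 * r) * s - 1)
        (Real.exp (2 * t) * 2 * s) t := by
      simpa using (hexp2.mul_const s).sub_const 1
    have hden : HasDerivAt (fun r : ℝ => Real.exp (2 * r) * s + 1)
        (Real.exp (2 * t) * 2 * s) t := by
      simpa using (hexp2.mul_const s).add_const 1
    have hf : HasDerivAt (fun r : ℝ => (Real.exp (2 * r) * s - 1) / (Real.exp (2 * r) * s + 1))
        ((Real.exp (2 * t) * 2 * s * (Real.exp (2 * t) * s + 1) -
          (Real.exp (2 * t) * s - 1) * (Real.exp (2 * t) * 2 * s)) /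
          (Real.exp (2 * t) * s + 1) ^ 2) t := hnum.div hden hut
    have hgnum : HasDerivAt (fun r : ℝ => 2 * Real.exp r) (2 * Real.exp t) t :=
      (Real.hasDerivAt_exp t).const_mul 2
    have hg : HasDerivAt (fun r : ℝ => 2 * Real.exp r / (Real.exp (2 * r) * s + 1))
        ((2 * Real.exp t * (Real.exp (2 * t) * s + 1) -
          2 * Real.exp t * (Real.exp (2 * t) * 2 * s)) /
          (Real.exp (2 * t) * s + 1) ^ 2) t := hgnum.div hden hut
    have hγ' : HasDerivAt γ
        (((Real.exp (2 * t) * 2 * s * (Real.exp (2 * t) * s + 1) -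
            (Real.exp (2 * t) * s - 1) * (Real.exp (2 * t) * 2 * s)) /
            (Real.exp (2 * t) * s + 1) ^ 2) • v +
          ((2 * Real.exp t * (Real.exp (2 * t) * s + 1) -
            2 * Real.exp t * (Real.exp (2 * t) * 2 * s)) /
            (Real.exp (2 * t) * s + 1) ^ 2) • y) t := by
      have h := (hf.smul_const v).add (hg.smul_const y)
      apply h.congr_of_eventuallyEq
      filter_upwards with r
      rw [hγ r]
      rfl
    convert hγ' using 1
    have hinner : ⟪v, γ t⟫ = (Real.exp (2 * t) * s - 1) / (Real.exp (2 * t) * s + 1) := by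
      rw [hγ t, inner_add_right, real_inner_smul_right, real_inner_smul_right, hvv, hvy]
      ring
    rw [hinner, hγ t]
    match_scalars <;> (field_simp; ring)
end
end

section
/- Let H be a real Hilbert space, v ∈ H, and let γ : ℝ → H be differentiable with γ'(t) = v − ⟪v, γ(t)⟫·γ(t) for all t ∈ ℝ. If ‖γ(0)‖ = 1, then ‖γ(t)‖ = 1 for all t, and γ(t) lies in the linear span of {v, γ(0)} for all t. -/
/-!
Both claims say that some quantity `u` built from `γ` vanishes identically, and in both cases
`u` solves a scalar linear equation `u' = a(t) u` with `u 0 = 0`: for `u = 1 - ‖γ‖²` one finds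
`u' = -2⟪v, γ⟫ u`, and for `u = γ - P γ`, with `P` the orthogonal projection onto
`span {v, γ 0}`, one finds `u' = -⟪v, γ⟫ u` because `P v = v`. The integrating factor
`exp (-∫ a)` shows that such a solution is `exp (∫ a) • u 0 = 0`.
-/

open scoped RealInnerProductSpace

section LinearODE

variable {E : Type*} [NormedAddCommGroup E] [NormedSpace ℝ E] {a : ℝ → ℝ} {u : ℝ → E}

theorem eq_exp_integral_smul_of_hasDerivAt_smul (ha : Continuous a)
    (hu : ∀ t, HasDerivAt u (a t • u t) t) (t₀ t : ℝ) :
    u t = Real.exp (∫ s in t₀..t, a s) • u t₀ := by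
  set A : ℝ → ℝ := fun t => ∫ s in t₀..t, a s
  have hA : ∀ t, HasDerivAt A (a t) t := fun t =>
    intervalIntegral.integral_hasDerivAt_right (ha.intervalIntegrable t₀ t)
      ha.stronglyMeasurable.stronglyMeasurableAtFilter ha.continuousAt
  have hφ : ∀ t, HasDerivAt (fun t => Real.exp (-A t) • u t) 0 t := by
    intro t
    refine ((hA t).neg.exp.smul (hu t)).congr_deriv ?_
    rw [smul_smul]
    module
  have hconst : Real.exp (-A t) • u t = Real.exp (-A t₀) • u t₀ :=
    is_const_of_deriv_eq_zero (fun t => (hφ t).differentiableAt) (fun t => (hφ t).deriv) t t₀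
  rw [show A t₀ = 0 from intervalIntegral.integral_same, neg_zero, Real.exp_zero, one_smul]
    at hconst
  rw [← hconst, smul_smul, ← Real.exp_add, add_neg_cancel, Real.exp_zero, one_smul]

end LinearODE

section GradientFlow

variable {H : Type*} [NormedAddCommGroup H] [InnerProductSpace ℝ H] {v : H} {γ : ℝ → H}

theorem hasDerivAt_one_sub_norm_sq_of_gradient_flow
    (hγ : ∀ t, HasDerivAt γ (v - ⟪v, γ t⟫ • γ t) t) (t : ℝ) :
    HasDerivAt (fun t => 1 - ‖γ t‖ ^ 2) ((-2 * ⟪v, γ t⟫) • (1 - ‖γ t‖ ^ 2)) t := by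
  refine ((hγ t).norm_sq.const_sub 1).congr_deriv ?_
  rw [inner_sub_right, real_inner_smul_right, real_inner_self_eq_norm_sq, real_inner_comm,
    smul_eq_mul]
  ring

theorem hasDerivAt_sub_apply_of_gradient_flow (L : H →L[ℝ] H) (hL : L v = v)
    (hγ : ∀ t, HasDerivAt γ (v - ⟪v, γ t⟫ • γ t) t) (t : ℝ) :
    HasDerivAt (fun t => γ t - L (γ t)) ((-⟪v, γ t⟫) • (γ t - L (γ t))) t := by
  refine ((hγ t).sub (L.hasFDerivAt.comp_hasDerivAt t (hγ t))).congr_deriv ?_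
  simp only [map_sub, map_smul, hL]
  module

end GradientFlow

/-- A solution of the gradient flow equation `γ' = v - ⟪v,γ⟫ • γ` starting on the unit
sphere stays on the unit sphere and remains in the plane spanned by `v` and `γ 0`. -/
theorem gradient_flow_stays_on_sphere_and_plane
    {H : Type*} [NormedAddCommGroup H] [InnerProductSpace ℝ H]
    (v : H) (γ : ℝ → H)
    (hγ : ∀ t : ℝ, HasDerivAt γ (v - ⟪v, γ t⟫ • γ t) t)
    (h0 : ‖γ 0‖ = 1) :
    (∀ t : ℝ, ‖γ t‖ = 1) ∧
      ∀ t : ℝ, γ t ∈ Submodule.span ℝ ({v, γ 0} : Set H) := by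
  have hc : Continuous fun t => ⟪v, γ t⟫ :=
    continuous_const.inner (continuous_iff_continuousAt.2 fun t => (hγ t).continuousAt)
  refine ⟨fun t => ?_, fun t => ?_⟩
  · have h := eq_exp_integral_smul_of_hasDerivAt_smul (hc.const_mul (-2))
      (hasDerivAt_one_sub_norm_sq_of_gradient_flow hγ) 0 t
    rw [h0, one_pow, sub_self, smul_zero, sub_eq_zero, eq_comm] at h
    exact (pow_eq_one_iff_of_nonneg (norm_nonneg _) two_ne_zero).1 h
  · set W := Submodule.span ℝ ({v, γ 0} : Set H)
    have : FiniteDimensional ℝ W := FiniteDimensional.span_of_finite ℝ (Set.toFinite _)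
    have hfixes : ∀ x ∈ ({v, γ 0} : Set H), W.starProjection x = x := fun x hx =>
      W.starProjection_eq_self_iff.2 (Submodule.subset_span hx)
    have h := eq_exp_integral_smul_of_hasDerivAt_smul hc.neg
      (hasDerivAt_sub_apply_of_gradient_flow _ (hfixes v (by simp)) hγ) 0 t
    rw [hfixes (γ 0) (by simp), sub_self, smul_zero, sub_eq_zero] at h
    exact h ▸ W.starProjection_apply_mem (γ t)
end

section
/- For all vectors x, y in a real inner product space, √(1+‖x‖²)·√(1+‖y‖²) − ⟪x,y⟫ ≥ 1, and equality holds if and only if x = y. (Consequently the formula cosh d(x,y) = √(1+‖x‖²)·√(1+‖y‖²) − ⟪x,y⟫, d(x,y) ≥ 0, defines a well-defined quantity d with d(x,y) = 0 iff x = y.) -/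
open scoped RealInnerProductSpace

theorem one_add_mul_le_sqrt_mul_sqrt (a b : ℝ) :
    1 + a * b ≤ √(1 + a ^ 2) * √(1 + b ^ 2) := by
  rw [← Real.sqrt_mul (by positivity)]
  refine (le_abs_self _).trans (Real.abs_le_sqrt ?_)
  nlinarith [sq_nonneg (a - b)]

-- `(1 + a²)(1 + b²) - (1 + ab)² = (a - b)²`
theorem sqrt_mul_sqrt_eq_one_add_mul_iff (a b : ℝ) :
    √(1 + a ^ 2) * √(1 + b ^ 2) = 1 + a * b ↔ a = b := by
  constructor
  · intro h
    have hsq : (1 + a ^ 2) * (1 + b ^ 2) = (1 + a * b) ^ 2 := by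
      rw [← h, mul_pow, Real.sq_sqrt (by positivity), Real.sq_sqrt (by positivity)]
    nlinarith [sq_nonneg (a - b)]
  · rintro rfl
    rw [Real.mul_self_sqrt (by positivity)]
    ring

theorem eq_of_inner_eq_norm_mul_of_norm_eq {E : Type*} [NormedAddCommGroup E]
    [InnerProductSpace ℝ E] {x y : E} (hinner : ⟪x, y⟫ = ‖x‖ * ‖y‖) (hnorm : ‖x‖ = ‖y‖) :
    x = y := by
  have : ‖x - y‖ ^ 2 = 0 := by
    rw [norm_sub_sq_real, hinner, hnorm]
    ring
  simpa [sub_eq_zero] using this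

/-- For all `x, y` in a real inner product space,
`√(1+‖x‖²)·√(1+‖y‖²) - ⟪x,y⟫ ≥ 1`, with equality iff `x = y`.  This makes the hyperbolic
distance `cosh d(x,y) = √(1+‖x‖²)·√(1+‖y‖²) - ⟪x,y⟫`, `d(x,y) ≥ 0`, well defined, with
`d(x,y) = 0` iff `x = y`. -/
theorem hyperbolic_cosh_ge_one {E : Type*} [NormedAddCommGroup E] [InnerProductSpace ℝ E]
    (x y : E) :
    1 ≤ Real.sqrt (1 + ‖x‖ ^ 2) * Real.sqrt (1 + ‖y‖ ^ 2) - ⟪x, y⟫ ∧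
      (Real.sqrt (1 + ‖x‖ ^ 2) * Real.sqrt (1 + ‖y‖ ^ 2) - ⟪x, y⟫ = 1 ↔ x = y) := by
  have hinner : ⟪x, y⟫ ≤ ‖x‖ * ‖y‖ := real_inner_le_norm x y
  have hsqrt := one_add_mul_le_sqrt_mul_sqrt ‖x‖ ‖y‖
  refine ⟨by linarith, fun h => ?_, ?_⟩
  · refine eq_of_inner_eq_norm_mul_of_norm_eq (by linarith) ?_
    exact (sqrt_mul_sqrt_eq_one_add_mul_iff _ _).1 (by linarith)
  · rintro rfl
    rw [(sqrt_mul_sqrt_eq_one_add_mul_iff _ _).2 rfl, real_inner_self_eq_norm_mul_norm]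
    ring
end

section
/- Let H be a real Hilbert space and e ∈ H a unit vector; for x ∈ H write x₁ = ⟪e,x⟫ and x̄ = x − x₁·e. Then the map h defined on the open half-space H⁺ = {x ∈ H : ⟪e,x⟫ > 0} by h(x) = ((‖x‖² − 1)/(2·x₁))·e + (1/x₁)·x̄ is a bijection from H⁺ onto H. -/
open scoped RealInnerProductSpace

/-!
Write `x ∈ H⁺` uniquely as `t • (e + v)` with `t > 0` and `v ⟂ e`. In these coordinates the map
becomes `t • (e + v) ↦ φ_A(t) • e + v` with `A = 1 + ‖v‖²` and `φ_A(t) = (A t² - 1) / (2t)`,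
and each `φ_A` with `A > 0` is an increasing bijection of `(0, ∞)` onto `ℝ`; since every
`y ∈ H` is uniquely `a • e + v` with `v ⟂ e`, the map is a bijection.
-/

open Set Submodule

lemma strictMonoOn_mul_sq_sub_one_div {A : ℝ} (hA : 0 ≤ A) :
    StrictMonoOn (fun t : ℝ => (A * t ^ 2 - 1) / (2 * t)) (Ioi 0) := by
  intro s (hs : 0 < s) t (ht : 0 < t) hst
  have key : ∀ u : ℝ, 0 < u → (A * u ^ 2 - 1) / (2 * u) = A * u / 2 - 1 / (2 * u) := by
    intro u hu
    field_simp
  have hinv : 1 / (2 * t) < 1 / (2 * s) := one_div_lt_one_div_of_lt (by positivity) (by linarith)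
  simp only [key s hs, key t ht]
  nlinarith

lemma bijOn_mul_sq_sub_one_div {A : ℝ} (hA : 0 < A) :
    BijOn (fun t : ℝ => (A * t ^ 2 - 1) / (2 * t)) (Ioi 0) univ := by
  refine ⟨mapsTo_univ _ _, (strictMonoOn_mul_sq_sub_one_div hA.le).injOn, ?_⟩
  rintro a -
  set r := √(a ^ 2 + A)
  have hr : r ^ 2 = a ^ 2 + A := Real.sq_sqrt (by positivity)
  have har : 0 < a + r := by nlinarith [Real.sqrt_nonneg (a ^ 2 + A)]
  refine ⟨(a + r) / A, div_pos har hA, ?_⟩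
  field_simp
  linear_combination hr

noncomputable def halfspaceMap {H : Type*} [NormedAddCommGroup H] [InnerProductSpace ℝ H]
    (e x : H) : H :=
  ((‖x‖ ^ 2 - 1) / (2 * ⟪e, x⟫)) • e + (⟪e, x⟫)⁻¹ • (x - ⟪e, x⟫ • e)

section UnitVector

variable {H : Type*} [NormedAddCommGroup H] [InnerProductSpace ℝ H] {e : H}

lemma inner_smul_add_of_mem_orthogonal (he : ‖e‖ = 1) {v : H} (hv : v ∈ (ℝ ∙ e)ᗮ) (a : ℝ) :
    ⟪e, a • e + v⟫ = a := by
  rw [inner_add_right, mem_orthogonal_singleton_iff_inner_right.mp hv, real_inner_smul_right,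
    real_inner_self_eq_norm_sq, he]
  ring

lemma norm_add_sq_of_mem_orthogonal (he : ‖e‖ = 1) {v : H} (hv : v ∈ (ℝ ∙ e)ᗮ) :
    ‖e + v‖ ^ 2 = 1 + ‖v‖ ^ 2 := by
  rw [norm_add_sq_real, mem_orthogonal_singleton_iff_inner_right.mp hv, he]
  ring

lemma smul_add_inj_of_mem_orthogonal (he : ‖e‖ = 1) {a b : ℝ} {v w : H} (hv : v ∈ (ℝ ∙ e)ᗮ)
    (hw : w ∈ (ℝ ∙ e)ᗮ) (h : a • e + v = b • e + w) : a = b ∧ v = w := by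
  obtain rfl : a = b := by
    rw [← inner_smul_add_of_mem_orthogonal he hv a, h, inner_smul_add_of_mem_orthogonal he hw]
  exact ⟨rfl, add_left_cancel h⟩

lemma exists_smul_add_mem_orthogonal (he : ‖e‖ = 1) (y : H) :
    ∃ a : ℝ, ∃ v ∈ (ℝ ∙ e)ᗮ, y = a • e + v := by
  refine ⟨⟪e, y⟫, y - ⟪e, y⟫ • e, ?_, by abel⟩
  rw [mem_orthogonal_singleton_iff_inner_right, inner_sub_right, real_inner_smul_right,
    real_inner_self_eq_norm_sq, he]
  ring

lemma exists_pos_smul_add_mem_orthogonal (he : ‖e‖ = 1) {x : H} (hx : 0 < ⟪e, x⟫) :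
    ∃ t : ℝ, 0 < t ∧ ∃ v ∈ (ℝ ∙ e)ᗮ, x = t • (e + v) := by
  obtain ⟨a, v, hv, rfl⟩ := exists_smul_add_mem_orthogonal he x
  rw [inner_smul_add_of_mem_orthogonal he hv] at hx
  refine ⟨a, hx, a⁻¹ • v, smul_mem _ _ hv, ?_⟩
  rw [smul_add, smul_inv_smul₀ hx.ne']

lemma inner_smul_add_self_of_mem_orthogonal (he : ‖e‖ = 1) {v : H} (hv : v ∈ (ℝ ∙ e)ᗮ) (t : ℝ) :
    ⟪e, t • (e + v)⟫ = t := by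
  rw [smul_add, inner_smul_add_of_mem_orthogonal he (smul_mem _ t hv)]

lemma halfspaceMap_smul_add (he : ‖e‖ = 1) {v : H} (hv : v ∈ (ℝ ∙ e)ᗮ) {t : ℝ} (ht : t ≠ 0) :
    halfspaceMap e (t • (e + v)) = (((1 + ‖v‖ ^ 2) * t ^ 2 - 1) / (2 * t)) • e + v := by
  rw [halfspaceMap, inner_smul_add_self_of_mem_orthogonal he hv, norm_smul, mul_pow,
    norm_add_sq_of_mem_orthogonal he hv, Real.norm_eq_abs, sq_abs, smul_add t e v,
    add_sub_cancel_left, inv_smul_smul₀ ht, mul_comm (t ^ 2)]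

end UnitVector

/-- For a unit vector `e` in a real Hilbert space `H`, writing `x₁ = ⟪e,x⟫` and
`x̄ = x - x₁ • e`, the map `h(x) = ((‖x‖² - 1)/(2x₁)) • e + x₁⁻¹ • x̄` is a bijection from
the open half-space `H⁺ = {x | ⟪e,x⟫ > 0}` onto `H`. -/
theorem halfspace_model_bijection {H : Type*} [NormedAddCommGroup H] [InnerProductSpace ℝ H]
    (e : H) (he : ‖e‖ = 1) :
    Set.BijOn
      (fun x : H => ((‖x‖ ^ 2 - 1) / (2 * ⟪e, x⟫)) • e + (⟪e, x⟫)⁻¹ • (x - ⟪e, x⟫ • e))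
      {x : H | 0 < ⟪e, x⟫} Set.univ := by
  change BijOn (halfspaceMap e) _ _
  refine ⟨mapsTo_univ _ _, ?_, ?_⟩
  · rintro _ hx _ hx' hxx'
    obtain ⟨s, hs, v, hv, rfl⟩ := exists_pos_smul_add_mem_orthogonal he hx
    obtain ⟨t, ht, w, hw, rfl⟩ := exists_pos_smul_add_mem_orthogonal he hx'
    rw [halfspaceMap_smul_add he hv hs.ne', halfspaceMap_smul_add he hw ht.ne'] at hxx'
    obtain ⟨hst, rfl⟩ := smul_add_inj_of_mem_orthogonal he hv hw hxx'
    rw [(bijOn_mul_sq_sub_one_div (by positivity)).injOn hs ht hst]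
  · rintro y -
    obtain ⟨a, v, hv, rfl⟩ := exists_smul_add_mem_orthogonal he y
    obtain ⟨t, ht, hta⟩ :=
      (bijOn_mul_sq_sub_one_div (A := 1 + ‖v‖ ^ 2) (by positivity)).surjOn (mem_univ a)
    refine ⟨t • (e + v), ?_, by rw [halfspaceMap_smul_add he hv (ne_of_gt ht), ← hta]⟩
    show 0 < ⟪e, t • (e + v)⟫
    rwa [inner_smul_add_self_of_mem_orthogonal he hv]
end

section
/- Let H be a real Hilbert space of dimension at least 2 (possibly infinite) and let L > 0. Then the set {∫₀ᴸ u(s) ds : u : [0,L] → H continuous with ‖u(s)‖ = 1 for all s ∈ [0,L]} equals the closed ball {x ∈ H : ‖x‖ ≤ L}. That is: every such integral has norm at most L, and conversely for every x ∈ H with ‖x‖ ≤ L there exists a continuous curve u : [0,L] → H with values in the unit sphere of H and ∫₀ᴸ u(s) ds = x. -/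
/-!
A curve of unit vectors has integral of norm at most `L`. Conversely, given `‖x‖ ≤ L`, pick a
unit vector `e` with `‖x‖ • e = x` and a unit vector `f ⟂ e` (this is where `dim H ≥ 2` enters).
The curve that runs once around the unit circle of `span {e, f}` during `[0, L - ‖x‖]` and then
rests at `e` has integral `0 + ‖x‖ • e = x`.
-/

open Real
open scoped InnerProductSpace

section NormedSpace

variable {E : Type*} [NormedAddCommGroup E] [NormedSpace ℝ E]

theorem exists_norm_eq_one_smul_eq [Nontrivial E] (x : E) : ∃ e : E, ‖e‖ = 1 ∧ ‖x‖ • e = x := by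
  rcases eq_or_ne x 0 with rfl | hx
  · obtain ⟨e, he⟩ := exists_norm_eq E zero_le_one
    exact ⟨e, he, by simp⟩
  · refine ⟨‖x‖⁻¹ • x, norm_smul_inv_norm (𝕜 := ℝ) hx, ?_⟩
    rw [smul_smul, mul_inv_cancel₀ (norm_ne_zero_iff.mpr hx), one_smul]

/-- For `ℓ = 0` the junk value `2 * π / 0 = 0` makes this the constant curve `e`. -/
noncomputable def loopThenRest (e f : E) (ℓ s : ℝ) : E :=
  cos (2 * π / ℓ * min s ℓ) • e + sin (2 * π / ℓ * min s ℓ) • f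

theorem continuous_loopThenRest (e f : E) (ℓ : ℝ) : Continuous (loopThenRest e f ℓ) := by
  unfold loopThenRest
  fun_prop

theorem loopThenRest_of_le (e f : E) {ℓ s : ℝ} (hs : ℓ ≤ s) : loopThenRest e f ℓ s = e := by
  rcases eq_or_ne ℓ 0 with rfl | hℓ
  · simp [loopThenRest]
  · simp [loopThenRest, min_eq_right hs, div_mul_cancel₀ _ hℓ]

variable [CompleteSpace E]

theorem integral_loopThenRest_self (e f : E) {ℓ : ℝ} (hℓ₀ : 0 ≤ ℓ) :
    ∫ s in (0 : ℝ)..ℓ, loopThenRest e f ℓ s = 0 := by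
  rcases eq_or_ne ℓ 0 with rfl | hℓ
  · exact intervalIntegral.integral_same
  have hc : 2 * π / ℓ ≠ 0 := div_ne_zero (by positivity) hℓ
  have hcℓ : 2 * π / ℓ * ℓ = 2 * π := div_mul_cancel₀ _ hℓ
  have hloop : Set.EqOn (loopThenRest e f ℓ)
      (fun s => cos (2 * π / ℓ * s) • e + sin (2 * π / ℓ * s) • f) (Set.uIcc 0 ℓ) := by
    intro s hs
    rw [loopThenRest, min_eq_left (Set.uIcc_of_le hℓ₀ ▸ hs).2]
  rw [intervalIntegral.integral_congr hloop,
    intervalIntegral.integral_add (Continuous.intervalIntegrable (by fun_prop) _ _)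
      (Continuous.intervalIntegrable (by fun_prop) _ _),
    intervalIntegral.integral_smul_const, intervalIntegral.integral_smul_const,
    intervalIntegral.integral_comp_mul_left cos hc, intervalIntegral.integral_comp_mul_left sin hc,
    mul_zero, hcℓ, integral_cos, integral_sin]
  simp

theorem integral_loopThenRest {ℓ L : ℝ} (hℓ : 0 ≤ ℓ) (hℓL : ℓ ≤ L) (e f : E) :
    ∫ s in (0 : ℝ)..L, loopThenRest e f ℓ s = (L - ℓ) • e := by
  have hint : ∀ a b : ℝ, IntervalIntegrable (loopThenRest e f ℓ) MeasureTheory.volume a b :=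
    fun a b => (continuous_loopThenRest e f ℓ).intervalIntegrable a b
  have hrest : Set.EqOn (loopThenRest e f ℓ) (fun _ => e) (Set.uIcc ℓ L) := fun s hs =>
    loopThenRest_of_le e f (Set.uIcc_of_le hℓL ▸ hs).1
  rw [← intervalIntegral.integral_add_adjacent_intervals (hint 0 ℓ) (hint ℓ L),
    integral_loopThenRest_self e f hℓ, intervalIntegral.integral_congr hrest,
    intervalIntegral.integral_const, zero_add]

end NormedSpace

section InnerProductSpace

variable {H : Type*} [NormedAddCommGroup H] [InnerProductSpace ℝ H]

theorem exists_norm_eq_one_inner_eq_zero_of_two_le_rank (hrank : 2 ≤ Module.rank ℝ H) (e : H) :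
    ∃ f : H, ‖f‖ = 1 ∧ ⟪e, f⟫_ℝ = 0 := by
  have hperp : (ℝ ∙ e)ᗮ ≠ ⊥ := by
    intro h
    have hrank_le : Module.rank ℝ H ≤ 1 := by
      rw [← rank_top ℝ H, ← Submodule.orthogonal_eq_bot_iff.mp h]
      simpa using rank_span_le (R := ℝ) ({e} : Set H)
    exact absurd (hrank.trans hrank_le) (by norm_num)
  obtain ⟨g, hg_mem, hg⟩ := Submodule.exists_mem_ne_zero_of_ne_bot hperp
  refine ⟨‖g‖⁻¹ • g, norm_smul_inv_norm (𝕜 := ℝ) hg, ?_⟩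
  rw [inner_smul_right, Submodule.mem_orthogonal_singleton_iff_inner_right.mp hg_mem, mul_zero]

theorem norm_cos_smul_add_sin_smul {e f : H} (he : ‖e‖ = 1) (hf : ‖f‖ = 1)
    (hef : ⟪e, f⟫_ℝ = 0) (θ : ℝ) : ‖cos θ • e + sin θ • f‖ = 1 := by
  have horth : ⟪cos θ • e, sin θ • f⟫_ℝ = 0 := by
    rw [real_inner_smul_left, real_inner_smul_right, hef, mul_zero, mul_zero]
  have hsq : ‖cos θ • e + sin θ • f‖ * ‖cos θ • e + sin θ • f‖ = 1 * 1 := by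
    rw [norm_add_sq_eq_norm_sq_add_norm_sq_real horth, norm_smul, norm_smul, he, hf,
      Real.norm_eq_abs, Real.norm_eq_abs, mul_one, mul_one, abs_mul_abs_self, abs_mul_abs_self,
      ← sq, ← sq, cos_sq_add_sin_sq, one_mul]
  exact (mul_self_inj (norm_nonneg _) zero_le_one).mp hsq

theorem norm_loopThenRest {e f : H} (he : ‖e‖ = 1) (hf : ‖f‖ = 1) (hef : ⟪e, f⟫_ℝ = 0)
    (ℓ s : ℝ) : ‖loopThenRest e f ℓ s‖ = 1 :=
  norm_cos_smul_add_sin_smul he hf hef _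

end InnerProductSpace

/-- For a real Hilbert space `H` of dimension at least `2` and `L > 0`, the set of values
`∫₀ᴸ u(s) ds` over all continuous unit-sphere-valued curves `u : [0,L] → H` equals the
closed ball of radius `L` centered at the origin. -/
theorem endpoint_map_range_eq_closedBall
    {H : Type*} [NormedAddCommGroup H] [InnerProductSpace ℝ H] [CompleteSpace H]
    (hrank : 2 ≤ Module.rank ℝ H) (L : ℝ) (hL : 0 < L) :
    {x : H | ∃ u : ℝ → H, ContinuousOn u (Set.Icc 0 L) ∧
        (∀ s ∈ Set.Icc (0 : ℝ) L, ‖u s‖ = 1) ∧ (∫ s in (0 : ℝ)..L, u s) = x} =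
      Metric.closedBall (0 : H) L := by
  ext x
  rw [Set.mem_ofPred_eq, mem_closedBall_zero_iff]
  constructor
  · rintro ⟨u, -, hu_norm, rfl⟩
    have hbound := intervalIntegral.norm_integral_le_of_norm_le_const (a := 0) (b := L) (C := 1)
      fun s hs => (hu_norm s (Set.Ioc_subset_Icc_self (Set.uIoc_of_le hL.le ▸ hs))).le
    rwa [sub_zero, abs_of_pos hL, one_mul] at hbound
  · intro hx
    have : Nontrivial H :=
      rank_pos_iff_nontrivial.mp ((by norm_num : (0 : Cardinal) < 2).trans_le hrank)
    obtain ⟨e, he, hxe⟩ := exists_norm_eq_one_smul_eq x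
    obtain ⟨f, hf, hef⟩ := exists_norm_eq_one_inner_eq_zero_of_two_le_rank hrank e
    refine ⟨loopThenRest e f (L - ‖x‖), (continuous_loopThenRest e f _).continuousOn,
      fun s _ => norm_loopThenRest he hf hef _ s, ?_⟩
    rw [integral_loopThenRest (sub_nonneg.mpr hx) (sub_le_self L (norm_nonneg x)), sub_sub_cancel,
      hxe]
end

section
/- Let H be a real Hilbert space, L > 0, and u : [0,L] → H a continuous curve with ‖u(s)‖ = 1 for all s ∈ [0,L]. Define Γ_u : H → H by Γ_u z = ∫₀ᴸ ⟪u(s), z⟫·u(s) ds (Bochner integral). Then Γ_u is a bounded self-adjoint operator satisfying 0 ≤ ⟪Γ_u z, z⟫ ≤ L·‖z‖² for all z ∈ H, and L is an eigenvalue of Γ_u (i.e. Γ_u z = L·z for some z ≠ 0) if and only if the range of u is contained in a one-dimensional subspace of H — equivalently, since u is continuous with values in the unit sphere, if and only if u is constant. -/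
/-!
Since `⟪Γ z, w⟫ = ∫ ⟪u s, z⟫ ⟪u s, w⟫ ds`, the operator is symmetric and positive, and
Cauchy–Schwarz with `‖u s‖ = 1` bounds it by `L`. If `Γ z = L z` with `z ≠ 0`, the continuous
nonnegative defect `‖z‖² - ⟪u s, z⟫²` integrates to zero, hence vanishes identically, and the
equality case of Cauchy–Schwarz puts every `u s` on the line `ℝ z`. That line meets the unit
sphere in the two points `±z / ‖z‖`, so by connectedness of `[0, L]` the curve is constant.
Conversely a constant curve `u ≡ u 0` satisfies `Γ (u 0) = L • u 0`.
-/

open scoped RealInnerProductSpace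
open Set Submodule

section UnitLine

variable {E : Type*} [NormedAddCommGroup E] [NormedSpace ℝ E]

theorem eq_or_eq_neg_of_mem_span_singleton_of_norm_eq_one {v x : E} (hx : x ∈ ℝ ∙ v)
    (h : ‖x‖ = 1) : x = ‖v‖⁻¹ • v ∨ x = -(‖v‖⁻¹ • v) := by
  obtain ⟨c, rfl⟩ := mem_span_singleton.mp hx
  rw [norm_smul, Real.norm_eq_abs] at h
  have hc : |c| = ‖v‖⁻¹ := eq_inv_of_mul_eq_one_left h
  rcases abs_eq (inv_nonneg.mpr (norm_nonneg v)) |>.mp hc with rfl | rfl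
  · exact Or.inl rfl
  · exact Or.inr (neg_smul _ _)

variable {X : Type*} [TopologicalSpace X] {S : Set X} {u : X → E}

theorem IsPreconnected.eq_of_norm_eq_one_of_mem_span_singleton (hS : IsPreconnected S)
    (hu : ContinuousOn u S) (hnorm : ∀ s ∈ S, ‖u s‖ = 1) {v : E} (hv : ∀ s ∈ S, u s ∈ ℝ ∙ v)
    {x y : X} (hx : x ∈ S) (hy : y ∈ S) : u x = u y :=
  hS.constant_of_mapsTo (T := {‖v‖⁻¹ • v, -(‖v‖⁻¹ • v)})
    (isDiscrete_iff_discreteTopology.mpr inferInstance) hu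
    (fun s hs => eq_or_eq_neg_of_mem_span_singleton_of_norm_eq_one (hv s hs) (hnorm s hs)) hx hy

theorem IsPreconnected.exists_rank_eq_one_forall_mem_iff (hS : IsPreconnected S)
    (hu : ContinuousOn u S) (hnorm : ∀ s ∈ S, ‖u s‖ = 1) {x₀ : X} (hx₀ : x₀ ∈ S) :
    (∃ W : Submodule ℝ E, Module.rank ℝ W = 1 ∧ ∀ s ∈ S, u s ∈ W) ↔ ∀ s ∈ S, u s = u x₀ := by
  constructor
  · rintro ⟨W, hW, hmem⟩ s hs
    obtain ⟨v, -, hWv⟩ := (rank_submodule_le_one_iff W).mp hW.le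
    exact hS.eq_of_norm_eq_one_of_mem_span_singleton hu hnorm (fun t ht => hWv (hmem t ht)) hs hx₀
  · intro hconst
    have hx₀_ne : u x₀ ≠ 0 := norm_ne_zero_iff.mp (by simp [hnorm x₀ hx₀])
    refine ⟨ℝ ∙ u x₀, (rank_submodule_eq_one_iff _).mpr
      ⟨u x₀, mem_span_singleton_self _, hx₀_ne, le_rfl⟩, fun s hs => ?_⟩
    rw [hconst s hs]
    exact mem_span_singleton_self _

end UnitLine

section CurveGram

variable {H : Type*} [NormedAddCommGroup H] [InnerProductSpace ℝ H] {u : ℝ → H} {a b : ℝ}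

noncomputable def curveGram (u : ℝ → H) (a b : ℝ) (z : H) : H :=
  ∫ s in a..b, ⟪u s, z⟫ • u s

theorem intervalIntegrable_inner_smul (hu : ContinuousOn u (uIcc a b)) (z : H) :
    IntervalIntegrable (fun s => ⟪u s, z⟫ • u s) MeasureTheory.volume a b :=
  ((hu.inner continuousOn_const).smul hu).intervalIntegrable

theorem isLinearMap_curveGram (hu : ContinuousOn u (uIcc a b)) :
    IsLinearMap ℝ (curveGram u a b) where
  map_add z w := by
    simp only [curveGram, inner_add_right, add_smul]
    exact intervalIntegral.integral_add (intervalIntegrable_inner_smul hu z)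
      (intervalIntegrable_inner_smul hu w)
  map_smul c z := by
    simp only [curveGram, real_inner_smul_right, mul_smul]
    exact intervalIntegral.integral_smul c _

theorem norm_curveGram_le (hu : ∀ s ∈ uIoc a b, ‖u s‖ ≤ 1) (z : H) :
    ‖curveGram u a b z‖ ≤ ‖z‖ * |b - a| := by
  refine intervalIntegral.norm_integral_le_of_norm_le_const fun s hs => ?_
  calc ‖⟪u s, z⟫ • u s‖ = |⟪u s, z⟫| * ‖u s‖ := norm_smul _ _
    _ ≤ (‖u s‖ * ‖z‖) * ‖u s‖ := by gcongr; exact abs_real_inner_le_norm _ _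
    _ ≤ (1 * ‖z‖) * 1 := by gcongr <;> exact hu s hs
    _ = ‖z‖ := by ring

theorem inner_curveGram_left [CompleteSpace H] (hu : ContinuousOn u (uIcc a b)) (z w : H) :
    ⟪curveGram u a b z, w⟫ = ∫ s in a..b, ⟪u s, z⟫ * ⟪u s, w⟫ := by
  rw [real_inner_comm, curveGram, ← innerSL_apply_apply ℝ,
    ← (innerSL ℝ w).intervalIntegral_comp_comm (intervalIntegrable_inner_smul hu z)]
  simp only [innerSL_apply_apply, real_inner_smul_right, real_inner_comm w]

theorem inner_curveGram_comm [CompleteSpace H] (hu : ContinuousOn u (uIcc a b)) (z w : H) :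
    ⟪curveGram u a b z, w⟫ = ⟪z, curveGram u a b w⟫ := by
  rw [real_inner_comm (curveGram u a b w) z, inner_curveGram_left hu, inner_curveGram_left hu]
  simp only [mul_comm]

theorem inner_curveGram_self_nonneg [CompleteSpace H] (hab : a ≤ b)
    (hu : ContinuousOn u (uIcc a b)) (z : H) : 0 ≤ ⟪curveGram u a b z, z⟫ := by
  rw [inner_curveGram_left hu]
  exact intervalIntegral.integral_nonneg hab fun s _ => mul_self_nonneg _

theorem inner_curveGram_self_le (hu : ∀ s ∈ uIoc a b, ‖u s‖ ≤ 1) (z : H) :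
    ⟪curveGram u a b z, z⟫ ≤ |b - a| * ‖z‖ ^ 2 :=
  calc ⟪curveGram u a b z, z⟫ ≤ ‖curveGram u a b z‖ * ‖z‖ := real_inner_le_norm _ _
    _ ≤ ‖z‖ * |b - a| * ‖z‖ := by gcongr; exact norm_curveGram_le hu z
    _ = |b - a| * ‖z‖ ^ 2 := by ring

theorem abs_inner_eq_norm_of_curveGram_eq_smul [CompleteSpace H] (hab : a < b)
    (hu : ContinuousOn u (Icc a b)) (hnorm : ∀ s ∈ Icc a b, ‖u s‖ ≤ 1) {z : H}
    (hz : curveGram u a b z = (b - a) • z) : ∀ s ∈ Icc a b, |⟪u s, z⟫| = ‖z‖ := by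
  have hu' : ContinuousOn u (uIcc a b) := by rwa [uIcc_of_le hab.le]
  have hinner : ContinuousOn (fun s => ⟪u s, z⟫) (Icc a b) := hu.inner continuousOn_const
  have hdefect_cont : ContinuousOn (fun s => ‖z‖ ^ 2 - ⟪u s, z⟫ * ⟪u s, z⟫) (Icc a b) :=
    continuousOn_const.sub (hinner.mul hinner)
  have hcs : ∀ s ∈ Icc a b, |⟪u s, z⟫| ≤ ‖z‖ := fun s hs =>
    (abs_real_inner_le_norm (u s) z).trans (mul_le_of_le_one_left (norm_nonneg z) (hnorm s hs))
  have hdefect : ∀ s ∈ Icc a b, 0 ≤ ‖z‖ ^ 2 - ⟪u s, z⟫ * ⟪u s, z⟫ := fun s hs => by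
    nlinarith [abs_mul_abs_self ⟪u s, z⟫, abs_nonneg ⟪u s, z⟫, hcs s hs]
  have hzero : ∫ s in a..b, (‖z‖ ^ 2 - ⟪u s, z⟫ * ⟪u s, z⟫) = 0 := by
    rw [intervalIntegral.integral_sub intervalIntegrable_const
      ((hu'.inner continuousOn_const).mul (hu'.inner continuousOn_const)).intervalIntegrable,
      ← inner_curveGram_left hu', hz, real_inner_smul_left, real_inner_self_eq_norm_sq,
      intervalIntegral.integral_const, smul_eq_mul, sub_self]
  intro s hs
  by_contra hne
  have hlt : |⟪u s, z⟫| < ‖z‖ := (hcs s hs).lt_of_ne hne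
  have hpos := intervalIntegral.integral_pos hab hdefect_cont
    (fun t ht => hdefect t (Ioc_subset_Icc_self ht))
    ⟨s, hs, by nlinarith [abs_mul_abs_self ⟪u s, z⟫, abs_nonneg ⟪u s, z⟫]⟩
  exact hpos.ne' hzero

theorem curveGram_eq_smul_of_forall_eq [CompleteSpace H] {x : H} (hx : ‖x‖ = 1)
    (h : ∀ s ∈ uIcc a b, u s = x) :
    curveGram u a b x = (b - a) • x := by
  refine (intervalIntegral.integral_congr fun s hs => ?_).trans (intervalIntegral.integral_const x)
  simp only [h s hs, real_inner_self_eq_norm_sq, hx, one_pow, one_smul]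

theorem exists_curveGram_eq_smul_iff [CompleteSpace H] (hab : a < b)
    (hu : ContinuousOn u (Icc a b)) (hnorm : ∀ s ∈ Icc a b, ‖u s‖ = 1) :
    (∃ z, z ≠ 0 ∧ curveGram u a b z = (b - a) • z) ↔ ∀ s ∈ Icc a b, u s = u a := by
  have ha : a ∈ Icc a b := left_mem_Icc.mpr hab.le
  constructor
  · rintro ⟨z, hz, hGz⟩ s hs
    have habs := abs_inner_eq_norm_of_curveGram_eq_smul hab hu (fun t ht => (hnorm t ht).le) hGz
    have hline : ∀ t ∈ Icc a b, u t ∈ ℝ ∙ z := fun t ht =>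
      Or.resolve_left (((norm_inner_eq_norm_tfae ℝ z (u t)).out 0 3).mp
        (by rw [real_inner_comm, Real.norm_eq_abs, habs t ht, hnorm t ht, mul_one])) hz
    exact isPreconnected_Icc.eq_of_norm_eq_one_of_mem_span_singleton hu hnorm hline hs ha
  · intro hconst
    refine ⟨u a, norm_ne_zero_iff.mp (by simp [hnorm a ha]), ?_⟩
    exact curveGram_eq_smul_of_forall_eq (hnorm a ha) (by rwa [uIcc_of_le hab.le])

end CurveGram

/-- For a continuous unit-sphere-valued curve `u : [0,L] → H` in a real Hilbert space, the
operator `Γ_u z = ∫₀ᴸ ⟪u(s), z⟫ • u(s) ds` is a bounded self-adjoint linear operator with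
`0 ≤ ⟪Γ_u z, z⟫ ≤ L‖z‖²`, and `L` is an eigenvalue of `Γ_u` iff the range of `u` lies in a
one-dimensional subspace of `H`, equivalently iff `u` is constant on `[0,L]`. -/
theorem snake_gram_operator_properties
    {H : Type*} [NormedAddCommGroup H] [InnerProductSpace ℝ H] [CompleteSpace H]
    (L : ℝ) (hL : 0 < L) (u : ℝ → H)
    (hu : ContinuousOn u (Set.Icc 0 L)) (hnorm : ∀ s ∈ Set.Icc (0 : ℝ) L, ‖u s‖ = 1)
    (Γ : H → H) (hΓ : ∀ z : H, Γ z = ∫ s in (0 : ℝ)..L, ⟪u s, z⟫ • u s) :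
    IsLinearMap ℝ Γ ∧
      (∃ C : ℝ, ∀ z : H, ‖Γ z‖ ≤ C * ‖z‖) ∧
      (∀ z w : H, ⟪Γ z, w⟫ = ⟪z, Γ w⟫) ∧
      (∀ z : H, 0 ≤ ⟪Γ z, z⟫ ∧ ⟪Γ z, z⟫ ≤ L * ‖z‖ ^ 2) ∧
      ((∃ z : H, z ≠ 0 ∧ Γ z = L • z) ↔
        ∃ W : Submodule ℝ H, Module.rank ℝ W = 1 ∧ ∀ s ∈ Set.Icc (0 : ℝ) L, u s ∈ W) ∧
      ((∃ z : H, z ≠ 0 ∧ Γ z = L • z) ↔ ∀ s ∈ Set.Icc (0 : ℝ) L, u s = u 0) := by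
  obtain rfl : Γ = curveGram u 0 L := funext hΓ
  have hu' : ContinuousOn u (uIcc 0 L) := by rwa [uIcc_of_le hL.le]
  have hnorm_le : ∀ s ∈ uIoc 0 L, ‖u s‖ ≤ 1 := fun s hs =>
    (hnorm s (Ioc_subset_Icc_self (by rwa [uIoc_of_le hL.le] at hs))).le
  have hlength : |L - 0| = L := by rw [sub_zero, abs_of_pos hL]
  have heig := exists_curveGram_eq_smul_iff hL hu hnorm
  rw [sub_zero] at heig
  refine ⟨isLinearMap_curveGram hu', ⟨L, fun z => ?_⟩, inner_curveGram_comm hu',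
    fun z => ⟨inner_curveGram_self_nonneg hL.le hu' z, ?_⟩,
    heig.trans (isPreconnected_Icc.exists_rank_eq_one_forall_mem_iff hu hnorm
      (left_mem_Icc.mpr hL.le)).symm, heig⟩
  · simpa only [hlength, mul_comm] using norm_curveGram_le hnorm_le z
  · simpa only [hlength] using inner_curveGram_self_le hnorm_le z
end
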